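/- arXiv:2108.00538 — 4 statements merged into one kernel-verified Lean document; each statement's English description precedes it below -/
import Mathlib

section
/- Let Φ ∈ C²(ℝ^{2d}) with coordinates (v_1, v_{−1}, …, v_d, v_{−d}), satisfying Φ(0,…,0) = 0 and Φ_{v_i}(0,…,0) = Φ_{v_{−i}}(0,…,0) for each i = 1, …, d, where Φ_{v_j} denotes ∂Φ/∂v_j. For φ ∈ C³(ℝ^d) and ε > 0 define Φ^ε(y) = Φ(φ(y + √ε e_1) − φ(y), φ(y − √ε e_1) − φ(y), …, φ(y + √ε e_d) − φ(y), φ(y − √ε e_d) − φ(y)). Then for every x ∈ ℝ^d, lim_{y→x, ε→0⁺} Φ^ε(y)/ε = Σ_{i=1}^d Φ_{v_i}(0,…,0)·φ_{x_ix_i}(x) + (1/2)·Σ_{i=1}^d Σ_{j=1}^d [Φ_{v_iv_j}(0,…,0) + Φ_{v_{−i}v_{−j}}(0,…,0) − 2Φ_{v_iv_{−j}}(0,…,0)]·φ_{x_i}(x)·φ_{x_j}(x). -/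
open Filter Set

/-- The `i`-th standard basis vector of `ℝ^d`. -/
noncomputable def stdBasis (d : ℕ) (i : Fin d) : Fin d → ℝ := Pi.single i 1

/-- First partial derivative `∂φ/∂x_i`. -/
noncomputable def pd {d : ℕ} (φ : (Fin d → ℝ) → ℝ) (x : Fin d → ℝ) (i : Fin d) : ℝ :=
  fderiv ℝ φ x (stdBasis d i)

/-- Second partial derivative `∂²φ/∂x_i∂x_j`. -/
noncomputable def pd2 {d : ℕ} (φ : (Fin d → ℝ) → ℝ) (x : Fin d → ℝ) (i j : Fin d) : ℝ :=
  fderiv ℝ (fun y => fderiv ℝ φ y (stdBasis d j)) x (stdBasis d i)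

/-- First partial derivative of `Φ : ℝ^{2d} → ℝ` in the coordinate `j : Fin d × Bool`
(`(i, true)` plays the role of `v_i` and `(i, false)` that of `v_{−i}`). -/
noncomputable def pdPhi {d : ℕ} (Φ : (Fin d × Bool → ℝ) → ℝ)
    (w : Fin d × Bool → ℝ) (j : Fin d × Bool) : ℝ :=
  fderiv ℝ Φ w (Pi.single j 1)

/-- Second partial derivative of `Φ : ℝ^{2d} → ℝ`. -/
noncomputable def pd2Phi {d : ℕ} (Φ : (Fin d × Bool → ℝ) → ℝ)
    (w : Fin d × Bool → ℝ) (j j' : Fin d × Bool) : ℝ :=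
  fderiv ℝ (fun v => fderiv ℝ Φ v (Pi.single j' 1)) w (Pi.single j 1)

lemma clm_apply_eq_sum {ι : Type*} [Fintype ι] [DecidableEq ι] (L : (ι → ℝ) →L[ℝ] ℝ)
    (u : ι → ℝ) : L u = ∑ i, u i * L (Pi.single i 1) := by
  have h : u = ∑ i, u i • (Pi.single i 1 : ι → ℝ) := by
    funext j
    simp [Finset.sum_apply, Pi.single_apply]
  conv_lhs => rw [h]
  simp [smul_eq_mul]

lemma hasDerivAt_slice {E F : Type*} [NormedAddCommGroup E] [NormedSpace ℝ E]
    [NormedAddCommGroup F] [NormedSpace ℝ F]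
    {f : E × ℝ → F} {y : E} {t : ℝ} (hf : DifferentiableAt ℝ f (y, t)) :
    HasDerivAt (fun s => f (y, s)) (fderiv ℝ f (y, t) (0, 1)) t := by
  have h1 : HasDerivAt (fun s : ℝ => (y, s)) ((0 : E), (1 : ℝ)) t :=
    (hasDerivAt_const t y).prodMk (hasDerivAt_id t)
  exact hf.hasFDerivAt.comp_hasDerivAt t h1

lemma key_limit {E : Type*} [NormedAddCommGroup E] [NormedSpace ℝ E]
    {g : E × ℝ → ℝ} (hg : ContDiff ℝ 2 g) (x : E)
    (h0 : ∀ y, g (y, 0) = 0)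
    (h1 : ∀ y, fderiv ℝ g (y, 0) (0, 1) = 0) :
    Tendsto (fun p : E × ℝ => g p / p.2 ^ 2) ((nhds x) ×ˢ (nhdsWithin 0 (Set.Ioi 0)))
      (nhds (fderiv ℝ (fun p => fderiv ℝ g p ((0 : E), (1 : ℝ))) (x, 0) (0, 1) / 2)) := by
  set g1 : E × ℝ → ℝ := fun p => fderiv ℝ g p ((0 : E), (1 : ℝ)) with hg1def
  set g2 : E × ℝ → ℝ := fun p => fderiv ℝ g1 p ((0 : E), (1 : ℝ)) with hg2def
  have hg1 : ContDiff ℝ 1 g1 :=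
    (hg.fderiv_right (by norm_num)).clm_apply contDiff_const
  have hg2c : Continuous g2 :=
    (hg1.continuous_fderiv (by norm_num)).clm_apply continuous_const
  have hda : ∀ y t, HasDerivAt (fun s => g (y, s)) (g1 (y, t)) t := fun y t =>
    hasDerivAt_slice ((hg.differentiable (by norm_num)).differentiableAt)
  have hdb : ∀ y t, HasDerivAt (fun s => g1 (y, s)) (g2 (y, t)) t := fun y t =>
    hasDerivAt_slice ((hg1.differentiable (by norm_num)).differentiableAt)
  set c := g2 (x, 0) with hc
  rw [Metric.tendsto_nhds]
  intro δ hδ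
  have hδ2 : 0 < δ / 2 := by linarith
  obtain ⟨r, hr, hball⟩ := Metric.continuousAt_iff.1 hg2c.continuousAt (δ / 2) hδ2
  filter_upwards [prod_mem_prod (Metric.ball_mem_nhds x hr)
      (Ioo_mem_nhdsGT_of_mem (Set.left_mem_Ico.2 hr))] with p hp
  obtain ⟨y, s⟩ := p
  obtain ⟨hy, hs0, hsr⟩ := hp
  have hbound : ∀ t ∈ Set.Icc (0:ℝ) s, |g2 (y, t) - c| ≤ δ / 2 := by
    intro t ht
    have hdist : dist ((y, t) : E × ℝ) (x, 0) < r := by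
      rw [Prod.dist_eq]
      refine max_lt (by simpa [Metric.mem_ball] using hy) ?_
      rw [Real.dist_eq, sub_zero]
      rw [abs_of_nonneg ht.1]
      exact lt_of_le_of_lt ht.2 hsr
    have := hball hdist
    rw [Real.dist_eq] at this
    exact this.le
  -- step 1
  have step1 : ∀ t ∈ Set.Icc (0:ℝ) s, |g1 (y, t) - c * t| ≤ (δ / 2) * t := by
    intro t ht
    have hmvt := Convex.norm_image_sub_le_of_norm_hasDerivWithin_le
      (f := fun t => g1 (y, t) - c * t) (f' := fun t => g2 (y, t) - c)
      (C := δ / 2) (s := Set.Icc (0:ℝ) s)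
      (fun u hu => ((hdb y u).sub (by simpa using (hasDerivAt_id u).const_mul c)).hasDerivWithinAt)
      (fun u hu => by simpa [Real.norm_eq_abs] using hbound u hu)
      (convex_Icc 0 s) (Set.left_mem_Icc.2 (le_of_lt hs0)) ht
    have hg10 : g1 (y, 0) = 0 := h1 y
    simpa [hg10, Real.norm_eq_abs, abs_of_nonneg ht.1] using hmvt
  -- step 2
  have step2 : |g (y, s) - c * s ^ 2 / 2| ≤ (δ / 2 * s) * s := by
    have hmvt := Convex.norm_image_sub_le_of_norm_hasDerivWithin_le
      (f := fun t => g (y, t) - c * t ^ 2 / 2) (f' := fun t => g1 (y, t) - c * t)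
      (C := δ / 2 * s) (s := Set.Icc (0:ℝ) s)
      (fun u hu => by
        have h2 : HasDerivAt (fun t : ℝ => c * t ^ 2 / 2) (c * u) u := by
          have := ((hasDerivAt_pow 2 u).const_mul c).div_const 2
          exact this.congr_deriv (by norm_num; ring)
        exact ((hda y u).sub h2).hasDerivWithinAt)
      (fun u hu => by
        have := step1 u hu
        rw [Real.norm_eq_abs]
        refine this.trans ?_
        have := hu.2
        nlinarith)
      (convex_Icc 0 s) (Set.left_mem_Icc.2 (le_of_lt hs0)) (Set.right_mem_Icc.2 (le_of_lt hs0))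
    simpa [h0 y, Real.norm_eq_abs, abs_of_nonneg (le_of_lt hs0)] using hmvt
  -- conclude
  have hs2 : (0:ℝ) < s ^ 2 := by positivity
  rw [Real.dist_eq]
  have heq : g (y, s) / s ^ 2 - c / 2 = (g (y, s) - c * s ^ 2 / 2) / s ^ 2 := by
    field_simp
    try ring
  calc |g (y, s) / s ^ 2 - c / 2| = |g (y, s) - c * s ^ 2 / 2| / s ^ 2 := by
        rw [heq, abs_div, abs_of_pos hs2]
    _ ≤ (δ / 2 * s) * s / s ^ 2 := by apply div_le_div_of_nonneg_right step2 hs2.le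
    _ = δ / 2 := by field_simp; try ring
    _ < δ := by linarith

lemma algebra_step {d : ℕ} (P R : Fin d → ℝ) (Q : Fin d × Bool → Fin d × Bool → ℝ)
    (S : Fin d × Bool → ℝ) (hQ : ∀ j j', Q j j' = Q j' j)
    (hS : ∀ i, S (i, true) = S (i, false)) :
    ∑ i, S (i, true) * R i + (1/2) * ∑ i, ∑ j,
        (Q (i, true) (j, true) + Q (i, false) (j, false) - 2 * Q (i, true) (j, false))
          * P i * P j
    = (∑ j' : Fin d × Bool, (if j'.2 then P j'.1 else -P j'.1)
          * ∑ j : Fin d × Bool, (if j.2 then P j.1 else -P j.1) * Q j j'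
        + ∑ j : Fin d × Bool, R j.1 * S j) / 2 := by
  rw [eq_div_iff (by norm_num : (2:ℝ) ≠ 0)]
  have hterm2 : ∑ j : Fin d × Bool, R j.1 * S j = 2 * ∑ i, S (i, true) * R i := by
    rw [Fintype.sum_prod_type]
    simp only [Fintype.sum_bool]
    rw [Finset.mul_sum]
    refine Finset.sum_congr rfl fun i _ => ?_
    rw [← hS i]
    ring
  have hcross : ∑ i, ∑ j, Q (i, false) (j, true) * P i * P j
      = ∑ i, ∑ j, Q (i, true) (j, false) * P i * P j := by
    rw [Finset.sum_comm]
    refine Finset.sum_congr rfl fun i _ => Finset.sum_congr rfl fun j _ => ?_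
    rw [hQ]
    ring
  have hterm1 : ∑ j' : Fin d × Bool, (if j'.2 then P j'.1 else -P j'.1)
          * ∑ j : Fin d × Bool, (if j.2 then P j.1 else -P j.1) * Q j j'
      = ∑ i, ∑ j, (Q (i, true) (j, true) + Q (i, false) (j, false)
          - 2 * Q (i, true) (j, false)) * P i * P j := by
    simp only [Fintype.sum_prod_type, Fintype.sum_bool, if_true, Bool.false_eq_true, if_false]
    calc ∑ i', (P i' * ∑ i, (P i * Q (i, true) (i', true) + -P i * Q (i, false) (i', true))
            + -P i' * ∑ i, (P i * Q (i, true) (i', false) + -P i * Q (i, false) (i', false)))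
        = ∑ i', ∑ i, (Q (i, true) (i', true) * P i * P i'
            + Q (i, false) (i', false) * P i * P i'
            - Q (i, true) (i', false) * P i * P i'
            - Q (i, false) (i', true) * P i * P i') := by
          refine Finset.sum_congr rfl fun i' _ => ?_
          rw [Finset.mul_sum, Finset.mul_sum, ← Finset.sum_add_distrib]
          exact Finset.sum_congr rfl fun i _ => by ring
      _ = ∑ i, ∑ i', (Q (i, true) (i', true) * P i * P i'
            + Q (i, false) (i', false) * P i * P i'
            - Q (i, true) (i', false) * P i * P i'
            - Q (i, false) (i', true) * P i * P i') := Finset.sum_comm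
      _ = ∑ i, ∑ j, (Q (i, true) (j, true) + Q (i, false) (j, false)
            - 2 * Q (i, true) (j, false)) * P i * P j := by
          have e : ∀ i j : Fin d, Q (i, true) (j, true) * P i * P j
              + Q (i, false) (j, false) * P i * P j
              - Q (i, true) (j, false) * P i * P j
              - Q (i, false) (j, true) * P i * P j
              = (Q (i, true) (j, true) + Q (i, false) (j, false)
                - 2 * Q (i, true) (j, false)) * P i * P j
                + (Q (i, true) (j, false) * P i * P j
                  - Q (i, false) (j, true) * P i * P j) := fun i j => by ring
          simp only [e]
          simp only [Finset.sum_add_distrib, Finset.sum_sub_distrib]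
          rw [hcross, sub_self, add_zero]
  rw [hterm1, hterm2]
  ring

/-- signed direction vector -/
noncomputable def uvec (d : ℕ) (j : Fin d × Bool) : Fin d → ℝ :=
  (if j.2 then (1:ℝ) else -1) • stdBasis d j.1

/-- the inner increment map -/
noncomputable def wmap (d : ℕ) (φ : (Fin d → ℝ) → ℝ) (p : (Fin d → ℝ) × ℝ) : Fin d × Bool → ℝ :=
  fun j => φ (p.1 + p.2 • uvec d j) - φ p.1

/-- **Consistency of the parabolically scaled generalized KPZ-type scheme.**
Let `Φ ∈ C²(ℝ^{2d})` with `Φ(0) = 0` and `Φ_{v_i}(0) = Φ_{v_{−i}}(0)` for each `i`.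
For `φ ∈ C³(ℝ^d)` let
`Φ^ε(y) = Φ(φ(y + √ε e_1) − φ(y), φ(y − √ε e_1) − φ(y), …)`.
Then `lim_{y→x, ε→0⁺} Φ^ε(y)/ε
  = Σ_i Φ_{v_i}(0) φ_{x_ix_i}(x)
    + (1/2) Σ_{i,j} [Φ_{v_iv_j}(0) + Φ_{v_{−i}v_{−j}}(0) − 2Φ_{v_iv_{−j}}(0)] φ_{x_i}(x) φ_{x_j}(x)`. -/
theorem stmt6 (d : ℕ) (Φ : (Fin d × Bool → ℝ) → ℝ) (hΦ : ContDiff ℝ 2 Φ)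
    (hΦ0 : Φ 0 = 0)
    (hsym : ∀ i : Fin d, pdPhi Φ 0 (i, true) = pdPhi Φ 0 (i, false))
    (φ : (Fin d → ℝ) → ℝ) (hφ : ContDiff ℝ 3 φ) (x : Fin d → ℝ) :
    Tendsto
      (fun q : (Fin d → ℝ) × ℝ =>
        Φ (fun j : Fin d × Bool =>
            φ (q.1 + (if j.2 then Real.sqrt q.2 else -Real.sqrt q.2) • stdBasis d j.1)
              - φ q.1) / q.2)
      ((nhds x) ×ˢ (nhdsWithin 0 (Set.Ioi 0)))
      (nhds
        (∑ i : Fin d, pdPhi Φ 0 (i, true) * pd2 φ x i i +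
          (1 / 2) * ∑ i : Fin d, ∑ j : Fin d,
            (pd2Phi Φ 0 (i, true) (j, true) + pd2Phi Φ 0 (i, false) (j, false)
              - 2 * pd2Phi Φ 0 (i, true) (j, false)) * pd φ x i * pd φ x j)) := by

  have hφ2 : ContDiff ℝ 2 φ := hφ.of_le (by norm_num)
  set g : (Fin d → ℝ) × ℝ → ℝ := fun p => Φ (wmap d φ p) with hgdef
  have hw : ContDiff ℝ 2 (wmap d φ) := by
    apply contDiff_pi.2
    intro j
    exact (hφ2.comp (contDiff_fst.add (contDiff_snd.smul contDiff_const))).sub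
      (hφ2.comp contDiff_fst)
  have hg : ContDiff ℝ 2 g := hΦ.comp hw
  have hw0 : ∀ y, wmap d φ (y, 0) = 0 := by
    intro y
    funext j
    simp [wmap]
  have h0 : ∀ y, g (y, 0) = 0 := by
    intro y
    simp [hgdef, hw0, hΦ0]
  -- slice derivative of w
  have hwslice : ∀ y t, HasDerivAt (fun s => wmap d φ (y, s))
      (fun j => fderiv ℝ φ (y + t • uvec d j) (uvec d j)) t := by
    intro y t
    apply hasDerivAt_pi.2
    intro j
    have hin : HasDerivAt (fun s : ℝ => y + s • uvec d j) (uvec d j) t := by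
      simpa using ((hasDerivAt_id t).smul_const (uvec d j)).const_add y
    exact ((hφ.differentiable (by norm_num) _).hasFDerivAt.comp_hasDerivAt t hin).sub_const
      (φ y)
  have hgslice : ∀ y t, HasDerivAt (fun s => g (y, s))
      (fderiv ℝ Φ (wmap d φ (y, t)) (fun j => fderiv ℝ φ (y + t • uvec d j) (uvec d j))) t :=
    fun y t => ((hΦ.differentiable (by norm_num) _).hasFDerivAt).comp_hasDerivAt t (hwslice y t)
  have hg1eq : ∀ y t, fderiv ℝ g (y, t) (0, 1)
      = fderiv ℝ Φ (wmap d φ (y, t)) (fun j => fderiv ℝ φ (y + t • uvec d j) (uvec d j)) := by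
    intro y t
    exact (hasDerivAt_slice ((hg.differentiable (by norm_num)).differentiableAt)).unique
      (hgslice y t)
  have h1 : ∀ y, fderiv ℝ g (y, 0) (0, 1) = 0 := by
    intro y
    rw [hg1eq, hw0]
    rw [clm_apply_eq_sum]
    rw [Fintype.sum_prod_type]
    refine Finset.sum_eq_zero fun i _ => ?_
    rw [Fintype.sum_bool]
    have hs := hsym i
    unfold pdPhi at hs
    simp only [uvec, zero_smul, add_zero, Bool.false_eq_true, if_true, if_false, neg_smul, one_smul, map_neg, hs]
    ring
  have hkey := key_limit hg x h0 h1
  -- second derivative computation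
  have hΦ' : ContDiff ℝ 1 (fderiv ℝ Φ) := hΦ.fderiv_right (by norm_num)
  have hg1cd : ContDiff ℝ 1 (fun p : (Fin d → ℝ) × ℝ => fderiv ℝ g p (0, 1)) :=
    (hg.fderiv_right (by norm_num)).clm_apply contDiff_const
  have hw00 : wmap d φ (x, 0) = 0 := hw0 x
  have hcomp1 : HasDerivAt (fun s => fderiv ℝ Φ (wmap d φ (x, s)))
      (fderiv ℝ (fderiv ℝ Φ) 0 (fun j => fderiv ℝ φ (x + (0:ℝ) • uvec d j) (uvec d j))) 0 := by
    have h := ((hΦ'.differentiable (by norm_num)) (wmap d φ (x, 0))).hasFDerivAt.comp_hasDerivAt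
      (0:ℝ) (hwslice x 0)
    rwa [hw00] at h
  have hcomp2 : HasDerivAt
      (fun s : ℝ => (fun j => fderiv ℝ φ (x + s • uvec d j) (uvec d j)))
      (fun j => fderiv ℝ (fun z => fderiv ℝ φ z (uvec d j)) x (uvec d j)) 0 := by
    apply hasDerivAt_pi.2
    intro j
    have hψ : ContDiff ℝ 1 (fun z => fderiv ℝ φ z (uvec d j)) :=
      (hφ.fderiv_right (by norm_num)).clm_apply contDiff_const
    have hin : HasDerivAt (fun s : ℝ => x + s • uvec d j) (uvec d j) 0 := by
      simpa using ((hasDerivAt_id (0:ℝ)).smul_const (uvec d j)).const_add x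
    have h := ((hψ.differentiable (by norm_num)) (x + (0:ℝ) • uvec d j)).hasFDerivAt.comp_hasDerivAt
      (0:ℝ) hin
    simpa [Function.comp_def] using h
  have hADeriv := hcomp1.clm_apply hcomp2
  have hfun : (fun s => fderiv ℝ g (x, s) (0, 1))
      = fun s => fderiv ℝ Φ (wmap d φ (x, s))
          (fun j => fderiv ℝ φ (x + s • uvec d j) (uvec d j)) :=
    funext fun s => hg1eq x s
  have hslice_g1 : HasDerivAt (fun s => fderiv ℝ Φ (wmap d φ (x, s))
        (fun j => fderiv ℝ φ (x + s • uvec d j) (uvec d j)))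
      (fderiv ℝ (fun p : (Fin d → ℝ) × ℝ => fderiv ℝ g p (0, 1)) (x, 0) (0, 1)) 0 := by
    have h := hasDerivAt_slice (f := fun p : (Fin d → ℝ) × ℝ => fderiv ℝ g p (0, 1))
      (y := x) (t := (0:ℝ)) ((hg1cd.differentiable (by norm_num)).differentiableAt)
    rwa [hfun] at h
  have hcval := hslice_g1.unique hADeriv
  -- coordinate identifications
  have hU0j : (fun j => fderiv ℝ φ (x + (0:ℝ) • uvec d j) (uvec d j))
      = fun j : Fin d × Bool => (if j.2 then pd φ x j.1 else -pd φ x j.1) := by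
    funext j
    rcases j with ⟨i, b⟩
    cases b <;>
      simp [uvec, pd, neg_smul, one_smul, map_neg]
  have hκj : (fun j => fderiv ℝ (fun z => fderiv ℝ φ z (uvec d j)) x (uvec d j))
      = fun j : Fin d × Bool => pd2 φ x j.1 j.1 := by
    funext j
    rcases j with ⟨i, b⟩
    cases b
    · have h1 : (fun z => fderiv ℝ φ z (uvec d (i, false)))
          = fun z => -(fderiv ℝ φ z (stdBasis d i)) := by
        funext z
        simp [uvec, neg_smul, one_smul, map_neg]
      rw [h1, fderiv_fun_neg]
      simp [uvec, pd2, neg_smul, one_smul, map_neg]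
    · have h1 : (fun z => fderiv ℝ φ z (uvec d (i, true)))
          = fun z => fderiv ℝ φ z (stdBasis d i) := by
        funext z
        simp [uvec]
      rw [h1]
      simp [uvec, pd2]
  have hQj : ∀ j j' : Fin d × Bool, pd2Phi Φ 0 j j'
      = (fderiv ℝ (fderiv ℝ Φ) 0) (Pi.single j 1) (Pi.single j' 1) := by
    intro j j'
    unfold pd2Phi
    rw [fderiv_clm_apply ((hΦ'.differentiable (by norm_num)).differentiableAt)
      (differentiableAt_const _)]
    simp
  have hQsymm : ∀ j j' : Fin d × Bool, pd2Phi Φ 0 j j' = pd2Phi Φ 0 j' j := by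
    intro j j'
    rw [hQj, hQj]
    exact second_derivative_symmetric
      (fun y => ((hΦ.differentiable (by norm_num)) y).hasFDerivAt)
      ((hΦ'.differentiable (by norm_num)) 0).hasFDerivAt _ _
  -- express c as explicit sums
  rw [hw00, hU0j, hκj] at hcval
  have hX : (fderiv ℝ (fderiv ℝ Φ) 0
        (fun j : Fin d × Bool => if j.2 then pd φ x j.1 else -pd φ x j.1))
        (fun j : Fin d × Bool => if j.2 then pd φ x j.1 else -pd φ x j.1)
      = ∑ j' : Fin d × Bool, (if j'.2 then pd φ x j'.1 else -pd φ x j'.1)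
          * ∑ j : Fin d × Bool, (if j.2 then pd φ x j.1 else -pd φ x j.1)
              * pd2Phi Φ 0 j j' := by
    rw [clm_apply_eq_sum]
    refine Finset.sum_congr rfl fun j' _ => ?_
    congr 1
    have hflip : (fderiv ℝ (fderiv ℝ Φ) 0
          (fun j : Fin d × Bool => if j.2 then pd φ x j.1 else -pd φ x j.1))
          (Pi.single j' 1)
        = ((fderiv ℝ (fderiv ℝ Φ) 0).flip (Pi.single j' 1))
            (fun j : Fin d × Bool => if j.2 then pd φ x j.1 else -pd φ x j.1) := rfl
    rw [hflip, clm_apply_eq_sum]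
    refine Finset.sum_congr rfl fun j _ => ?_
    rw [hQj]
    rfl
  have hY : fderiv ℝ Φ 0 (fun j : Fin d × Bool => pd2 φ x j.1 j.1)
      = ∑ j : Fin d × Bool, pd2 φ x j.1 j.1 * pdPhi Φ 0 j := by
    rw [clm_apply_eq_sum]
    rfl
  rw [hX, hY] at hcval
  have hfinal : ∑ i : Fin d, pdPhi Φ 0 (i, true) * pd2 φ x i i +
      (1 / 2) * ∑ i : Fin d, ∑ j : Fin d,
        (pd2Phi Φ 0 (i, true) (j, true) + pd2Phi Φ 0 (i, false) (j, false)
          - 2 * pd2Phi Φ 0 (i, true) (j, false)) * pd φ x i * pd φ x j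
      = fderiv ℝ (fun p : (Fin d → ℝ) × ℝ => fderiv ℝ g p (0, 1)) (x, 0) (0, 1) / 2 := by
    rw [hcval]
    exact algebra_step (pd φ x) (fun i => pd2 φ x i i) (pd2Phi Φ 0) (pdPhi Φ 0) hQsymm
      (fun i => hsym i)
  rw [hfinal]
  -- wiring: substitute s = sqrt ε
  have hsqrt_t : Tendsto Real.sqrt (nhdsWithin 0 (Set.Ioi 0)) (nhdsWithin 0 (Set.Ioi 0)) := by
    apply tendsto_nhdsWithin_iff.2
    constructor
    · have h : Tendsto Real.sqrt (nhdsWithin 0 (Set.Ioi 0)) (nhds (Real.sqrt 0)) :=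
        Real.continuous_sqrt.continuousWithinAt
      rwa [Real.sqrt_zero] at h
    · filter_upwards [self_mem_nhdsWithin] with ε hε
      exact Real.sqrt_pos.2 hε
  have hmap : Tendsto (fun q : (Fin d → ℝ) × ℝ => (q.1, Real.sqrt q.2))
      ((nhds x) ×ˢ (nhdsWithin 0 (Set.Ioi 0))) ((nhds x) ×ˢ (nhdsWithin 0 (Set.Ioi 0))) :=
    tendsto_fst.prodMk (hsqrt_t.comp tendsto_snd)
  have hco := hkey.comp hmap
  apply Filter.Tendsto.congr' _ hco
  filter_upwards [prod_mem_prod univ_mem self_mem_nhdsWithin] with q hq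
  obtain ⟨-, hq2⟩ := hq
  show g (q.1, Real.sqrt q.2) / (Real.sqrt q.2) ^ 2 = _
  rw [Real.sq_sqrt (le_of_lt hq2)]
  congr 1
  show Φ (wmap d φ (q.1, Real.sqrt q.2)) = _
  congr 1
  funext j
  rcases j with ⟨i, b⟩
  cases b <;>
    simp [wmap, uvec, smul_smul, mul_comm]
end

section
/- Let k ≥ 2 be an even integer and let V : ℝ → ℝ be a convex, even, C^{k+1} function with V(0) = 0 a strict minimum, V^{(1)}(0) = ⋯ = V^{(k−1)}(0) = 0, and V^{(k)}(0) > 0. Fix φ ∈ C²(ℝ^d) and, for y ∈ ℝ^d and ε > 0, let Φ^ε(y) denote the midpoint of the (closed interval of) minimizers of the convex function z ↦ Σ_{i=1}^d [V(φ(y + √ε e_i) − φ(y) − z) + V(φ(y − √ε e_i) − φ(y) − z)]. Then for every x ∈ ℝ^d: (1/2)·min_i φ_{x_ix_i}(x) ≤ liminf_{y→x, ε→0⁺} Φ^ε(y)/ε ≤ limsup_{y→x, ε→0⁺} Φ^ε(y)/ε ≤ (1/2)·max_i φ_{x_ix_i}(x). Moreover, if Dφ(x) ≠ 0, then lim_{y→x,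 ε→0⁺} Φ^ε(y)/ε = ( Σ_{i=1}^d |φ_{x_i}(x)|^{k−2} φ_{x_ix_i}(x) ) / ( 2·Σ_{i=1}^d |φ_{x_i}(x)|^{k−2} ). -/
open Filter Set Topology

/-- The gradient `Dφ(x)` of `φ : ℝ^d → ℝ`. -/
noncomputable def grad {d : ℕ} (φ : (Fin d → ℝ) → ℝ) (x : Fin d → ℝ) : Fin d → ℝ :=
  fun i => fderiv ℝ φ x (stdBasis d i)

/-- `Φ^ε(y)`: the midpoint of the (closed interval of) minimizers of the convex map
`z ↦ Σ_i [V(φ(y + √ε e_i) − φ(y) − z) + V(φ(y − √ε e_i) − φ(y) − z)]`. -/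
noncomputable def PhiEps {d : ℕ} (V : ℝ → ℝ) (φ : (Fin d → ℝ) → ℝ)
    (y : Fin d → ℝ) (ε : ℝ) : ℝ :=
  let f : ℝ → ℝ := fun z => ∑ i : Fin d,
    (V (φ (y + Real.sqrt ε • stdBasis d i) - φ y - z) +
     V (φ (y - Real.sqrt ε • stdBasis d i) - φ y - z))
  (sInf {z | ∀ w : ℝ, f z ≤ f w} + sSup {z | ∀ w : ℝ, f z ≤ f w}) / 2

section Stmt9Aux

open Filter Set Topology

lemma stmt9_abs_uIcc {α β ξ c r : ℝ} (hα : |α - c| ≤ r) (hβ : |β - c| ≤ r)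
    (hξ : ξ ∈ Set.uIcc α β) : |ξ - c| ≤ r := by
  rw [Set.mem_uIcc] at hξ
  rw [abs_le] at *
  rcases hξ with ⟨h1, h2⟩ | ⟨h1, h2⟩ <;> constructor <;> linarith

lemma stmt9_mvt_bound {F F' : ℝ → ℝ} {a b C : ℝ} (hab : a ≤ b)
    (hF : ∀ t ∈ Icc a b, HasDerivAt F (F' t) t)
    (hC : ∀ t ∈ Icc a b, |F' t| ≤ C) : |F b - F a| ≤ C * (b - a) := by
  have := norm_image_sub_le_of_norm_deriv_le_segment'
    (f := F) (f' := F') (a := a) (b := b)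
    (fun t ht => (hF t ht).hasDerivWithinAt)
    (fun t ht => hC t (Ico_subset_Icc_self ht)) b (right_mem_Icc.mpr hab)
  simpa [Real.norm_eq_abs] using this

lemma stmt9_taylor : ∀ (n : ℕ) (g : ℝ → ℝ) (c : ℝ),
    ContDiff ℝ n g → (∀ j < n, iteratedDeriv j g 0 = 0) → iteratedDeriv n g 0 = c →
    ∀ δ : ℝ, 0 < δ → ∃ r > 0, ∀ t : ℝ, |t| ≤ r →
      |g t - c / n.factorial * t ^ n| ≤ δ * |t| ^ n := by
  intro n
  induction n with
  | zero =>
    intro g c hg _ hc δ hδ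
    have hgc : ContinuousAt g 0 := hg.continuous.continuousAt
    rcases Metric.continuousAt_iff.mp hgc δ hδ with ⟨r, hr, hball⟩
    refine ⟨r / 2, by linarith, fun t ht => ?_⟩
    have : dist t 0 < r := by
      rw [Real.dist_eq, sub_zero]; linarith
    have := hball this
    rw [Real.dist_eq] at this
    simp only [iteratedDeriv_zero] at hc
    simp only [Nat.factorial_zero, Nat.cast_one, div_one, pow_zero, mul_one, ← hc]
    exact le_of_lt this
  | succ n ih =>
    intro g c hg h0 hc δ hδ
    have hcast : ((n : ℕ∞) + 1 : WithTop ℕ∞) = ((n + 1 : ℕ) : WithTop ℕ∞) := by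
      push_cast; ring
    have hgd : Differentiable ℝ g := by
      apply hg.differentiable
      simp
    have hg' : ContDiff ℝ n (deriv g) := by
      have := (contDiff_succ_iff_deriv (n := (n : ℕ∞))).mp (by rw [hcast]; exact hg)
      exact this.2.2
    have hder0 : ∀ j < n, iteratedDeriv j (deriv g) 0 = 0 := by
      intro j hj
      rw [← iteratedDeriv_succ']
      exact h0 (j + 1) (by omega)
    have hdern : iteratedDeriv n (deriv g) 0 = c := by
      rw [← iteratedDeriv_succ']; exact hc
    rcases ih (deriv g) c hg' hder0 hdern δ hδ with ⟨r, hr, hbound⟩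
    refine ⟨r, hr, fun t ht => ?_⟩
    have hfacne : ((n + 1).factorial : ℝ) ≠ 0 := by positivity
    set F : ℝ → ℝ := fun s => g s - c / (n + 1).factorial * s ^ (n + 1) with hF
    have hF0 : F 0 = 0 := by
      have hg0 : g 0 = 0 := by
        have := h0 0 (Nat.succ_pos n); simpa [iteratedDeriv_zero] using this
      simp [hF, hg0]
    have hFderiv : ∀ s : ℝ, HasDerivAt F (deriv g s - c / n.factorial * s ^ n) s := by
      intro s
      have h1 : HasDerivAt g (deriv g s) s := (hgd s).hasDerivAt
      have h2 := (hasDerivAt_pow (n + 1) s).const_mul (c / ((n + 1).factorial : ℝ))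
      have := h1.sub h2
      convert this using 1
      · rfl
      · rfl
      · rfl
      have : ((n + 1).factorial : ℝ) = (n + 1) * n.factorial := by
        rw [Nat.factorial_succ]; push_cast; ring
      rw [this, Nat.add_sub_cancel]
      push_cast
      field_simp
    have hbnd : ∀ s : ℝ, |s| ≤ |t| → |deriv g s - c / n.factorial * s ^ n| ≤ δ * |t| ^ n := by
      intro s hs
      calc |deriv g s - c / n.factorial * s ^ n| ≤ δ * |s| ^ n :=
            hbound s (le_trans hs ht)
        _ ≤ δ * |t| ^ n := by
            apply mul_le_mul_of_nonneg_left _ (le_of_lt hδ)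
            exact pow_le_pow_left₀ (abs_nonneg s) hs n
    rcases le_or_gt 0 t with htpos | htneg
    · have := stmt9_mvt_bound (F := F) (F' := fun s => deriv g s - c / n.factorial * s ^ n)
        (a := 0) (b := t) htpos (fun s _ => hFderiv s)
        (fun s hs => hbnd s (by rw [abs_of_nonneg hs.1, abs_of_nonneg htpos]; exact hs.2))
      rw [hF0] at this
      calc |g t - c / (n + 1).factorial * t ^ (n + 1)| = |F t - 0| := by simp [hF]
        _ ≤ δ * |t| ^ n * (t - 0) := this
        _ = δ * |t| ^ (n + 1) := by
            rw [sub_zero, abs_of_nonneg htpos]; ring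
    · have := stmt9_mvt_bound (F := F) (F' := fun s => deriv g s - c / n.factorial * s ^ n)
        (a := t) (b := 0) (le_of_lt htneg) (fun s _ => hFderiv s)
        (fun s hs => hbnd s (by
          rw [abs_le]; rw [abs_of_neg htneg]; constructor <;> [linarith [hs.1]; linarith [hs.2]]))
      rw [hF0] at this
      have h2 : |F t| ≤ δ * |t| ^ n * (0 - t) := by
        calc |F t| = |0 - F t| := by rw [zero_sub, abs_neg]
          _ ≤ δ * |t| ^ n * (0 - t) := this
      calc |g t - c / (n + 1).factorial * t ^ (n + 1)| = |F t| := by simp [hF]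
        _ ≤ δ * |t| ^ n * (0 - t) := h2
        _ = δ * |t| ^ (n + 1) := by
            rw [abs_of_neg htneg]; ring

lemma stmt9_midpoint {f S' : ℝ → ℝ} {z₁ z₂ : ℝ} (hz : z₁ ≤ z₂)
    (hf : ∀ z, HasDerivAt f (S' z) z) (hmono : Monotone S')
    (h1 : S' z₁ < 0) (h2 : 0 < S' z₂) :
    (sInf {z | ∀ w, f z ≤ f w} + sSup {z | ∀ w, f z ≤ f w}) / 2 ∈ Icc z₁ z₂ := by
  have hcont : Continuous f := by
    have : Differentiable ℝ f := fun z => (hf z).differentiableAt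
    exact this.continuous
  obtain ⟨z0, hz0mem, hz0min⟩ :=
    isCompact_Icc.exists_isMinOn (nonempty_Icc.mpr hz) hcont.continuousOn
  have key1 : ∀ z, z₂ < z → f z₂ < f z := by
    intro z hzz
    obtain ⟨ξ, hξ, hslope⟩ := exists_hasDerivAt_eq_slope f S' hzz
      hcont.continuousOn (fun u _ => hf u)
    have hpos : 0 < S' ξ := lt_of_lt_of_le h2 (hmono (le_of_lt hξ.1))
    rw [hslope] at hpos
    have hd : 0 < z - z₂ := by linarith
    rcases div_pos_iff.mp hpos with ⟨ha, _⟩ | ⟨_, hb⟩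
    · linarith
    · linarith
  have key2 : ∀ z, z < z₁ → f z₁ < f z := by
    intro z hzz
    obtain ⟨ξ, hξ, hslope⟩ := exists_hasDerivAt_eq_slope f S' hzz
      hcont.continuousOn (fun u _ => hf u)
    have hneg : S' ξ < 0 := lt_of_le_of_lt (hmono (le_of_lt hξ.2)) h1
    rw [hslope] at hneg
    have hd : 0 < z₁ - z := by linarith
    rcases div_neg_iff.mp hneg with ⟨_, hb⟩ | ⟨ha, _⟩
    · linarith
    · linarith
  have hglob : ∀ w, f z0 ≤ f w := by
    intro w
    rcases lt_or_ge w z₁ with h | h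
    · exact le_of_lt (lt_of_le_of_lt (hz0min (left_mem_Icc.mpr hz)) (key2 w h))
    rcases le_or_gt w z₂ with h' | h'
    · exact hz0min ⟨h, h'⟩
    · exact le_of_lt (lt_of_le_of_lt (hz0min (right_mem_Icc.mpr hz)) (key1 w h'))
  set M := {z | ∀ w, f z ≤ f w} with hM
  have hz0M : z0 ∈ M := hglob
  have hMIcc : M ⊆ Icc z₁ z₂ := by
    intro z hzM
    by_contra hcon
    rw [mem_Icc] at hcon
    push_neg at hcon
    rcases lt_or_ge z z₁ with h | h
    · exact absurd (hzM z₁) (not_le.mpr (key2 z h))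
    · exact absurd (hzM z₂) (not_le.mpr (key1 z (hcon h)))
  have hbddb : BddBelow M := ⟨z₁, fun b hb => (hMIcc hb).1⟩
  have hbdda : BddAbove M := ⟨z₂, fun b hb => (hMIcc hb).2⟩
  have h1' : z₁ ≤ sInf M := le_csInf ⟨z0, hz0M⟩ fun b hb => (hMIcc hb).1
  have h2' : sInf M ≤ z₂ := csInf_le_of_le hbddb hz0M (hMIcc hz0M).2
  have h3' : z₁ ≤ sSup M := le_csSup_of_le hbdda hz0M (hMIcc hz0M).1
  have h4' : sSup M ≤ z₂ := csSup_le ⟨z0, hz0M⟩ fun b hb => (hMIcc hb).2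
  constructor <;> [linarith; linarith]

end Stmt9Aux

set_option maxHeartbeats 1600000 in
/-- **Consistency for smooth potentials with a strict minimum (Lemma 5.1).**
Let `k ≥ 2` be even and `V` convex, even, `C^{k+1}`, with `V(0) = 0` a strict minimum,
`V⁽¹⁾(0) = ⋯ = V⁽ᵏ⁻¹⁾(0) = 0` and `V⁽ᵏ⁾(0) > 0`.  Then for every `x`,
`(1/2) min_i φ_{x_ix_i}(x) ≤ liminf Φ^ε(y)/ε ≤ limsup Φ^ε(y)/ε ≤ (1/2) max_i φ_{x_ix_i}(x)`
as `y → x`, `ε → 0⁺`, and if `Dφ(x) ≠ 0` then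
`lim Φ^ε(y)/ε = Σ_i |φ_{x_i}(x)|^{k−2} φ_{x_ix_i}(x) / (2 Σ_i |φ_{x_i}(x)|^{k−2})`. -/


theorem stmt9 (d : ℕ) (hd : 0 < d) (k : ℕ) (hk2 : 2 ≤ k) (hkeven : Even k)
    (V : ℝ → ℝ) (hVconv : ConvexOn ℝ Set.univ V) (hVeven : ∀ x : ℝ, V (-x) = V x)
    (hVsmooth : ContDiff ℝ (k + 1) V)
    (hV0 : V 0 = 0) (hVstrict : ∀ x : ℝ, x ≠ 0 → 0 < V x)
    (hVder : ∀ l : ℕ, 1 ≤ l → l ≤ k - 1 → iteratedDeriv l V 0 = 0)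
    (hVk : 0 < iteratedDeriv k V 0)
    (φ : (Fin d → ℝ) → ℝ) (hφ : ContDiff ℝ 2 φ) (x : Fin d → ℝ) :
    ((⨅ i : Fin d, pd2 φ x i i) / 2 ≤
        liminf (fun q : (Fin d → ℝ) × ℝ => PhiEps V φ q.1 q.2 / q.2)
          ((nhds x) ×ˢ (nhdsWithin 0 (Set.Ioi 0))) ∧
      liminf (fun q : (Fin d → ℝ) × ℝ => PhiEps V φ q.1 q.2 / q.2)
          ((nhds x) ×ˢ (nhdsWithin 0 (Set.Ioi 0))) ≤
        limsup (fun q : (Fin d → ℝ) × ℝ => PhiEps V φ q.1 q.2 / q.2)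
          ((nhds x) ×ˢ (nhdsWithin 0 (Set.Ioi 0))) ∧
      limsup (fun q : (Fin d → ℝ) × ℝ => PhiEps V φ q.1 q.2 / q.2)
          ((nhds x) ×ˢ (nhdsWithin 0 (Set.Ioi 0))) ≤
        (⨆ i : Fin d, pd2 φ x i i) / 2) ∧
    (grad φ x ≠ 0 →
      Tendsto (fun q : (Fin d → ℝ) × ℝ => PhiEps V φ q.1 q.2 / q.2)
        ((nhds x) ×ˢ (nhdsWithin 0 (Set.Ioi 0)))
        (nhds ((∑ i : Fin d, |pd φ x i| ^ (k - 2) * pd2 φ x i i) /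
          (2 * ∑ i : Fin d, |pd φ x i| ^ (k - 2))))) := by
  classical
  obtain ⟨m, rfl⟩ : ∃ m, k = m + 2 := ⟨k - 2, by omega⟩
  simp only [Nat.add_sub_cancel]
  haveI : Nonempty (Fin d) := ⟨⟨0, hd⟩⟩
  have hmeven : Even m := by
    obtain ⟨r, hr⟩ := hkeven; exact ⟨r - 1, by omega⟩
  -- ### Facts about V
  have hVd : Differentiable ℝ V := hVsmooth.differentiable (by
    simp)
  have c1 : ContDiff ℝ (m + 2 : ℕ) (deriv V) := by
    have := (contDiff_succ_iff_deriv (n := ((m + 2 : ℕ) : ℕ∞))).mp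
      (by exact_mod_cast hVsmooth)
    exact_mod_cast this.2.2
  have c2 : ContDiff ℝ (m + 1 : ℕ) (deriv (deriv V)) := by
    have := (contDiff_succ_iff_deriv (n := ((m + 1 : ℕ) : ℕ∞))).mp
      (by exact_mod_cast c1)
    exact_mod_cast this.2.2
  have hV1d : Differentiable ℝ (deriv V) := c1.differentiable (by
    simp)
  have hV2hasD : ∀ t : ℝ, HasDerivAt (deriv V) (deriv (deriv V) t) t :=
    fun t => (hV1d t).hasDerivAt
  have hV1cont : Continuous (deriv V) := c1.continuous
  have hV1mono : Monotone (deriv V) := by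
    have := hVconv.monotoneOn_deriv (fun z _ => hVd z)
    exact monotoneOn_univ.mp this
  have hV1odd : ∀ t : ℝ, deriv V (-t) = -deriv V t := by
    intro t
    have h1 : HasDerivAt (fun s : ℝ => V (-s)) (deriv V (-t) * (-1)) t :=
      HasDerivAt.comp t (hVd (-t)).hasDerivAt (hasDerivAt_neg t)
    have h2 : (fun s : ℝ => V (-s)) = V := funext hVeven
    rw [h2] at h1
    have := h1.unique (hVd t).hasDerivAt
    linarith
  have hder0 : ∀ j < m, iteratedDeriv j (deriv (deriv V)) 0 = 0 := by
    intro j hj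
    rw [← iteratedDeriv_succ', ← iteratedDeriv_succ']
    exact hVder (j + 2) (by omega) (by omega)
  have hderm : iteratedDeriv m (deriv (deriv V)) 0 = iteratedDeriv (m + 2) V 0 := by
    rw [← iteratedDeriv_succ', ← iteratedDeriv_succ']
  set c₂ : ℝ := iteratedDeriv (m + 2) V 0 / m.factorial with hc₂def
  have hc₂ : 0 < c₂ := div_pos hVk (by positivity)
  have peano : ∀ δ : ℝ, 0 < δ → ∃ r > 0, ∀ t : ℝ, |t| ≤ r →
      |deriv (deriv V) t - c₂ * t ^ m| ≤ δ * |t| ^ m := by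
    intro δ hδ
    have := stmt9_taylor m (deriv (deriv V)) (iteratedDeriv (m + 2) V 0)
      (c2.of_le (by exact_mod_cast le_of_lt (Nat.lt_succ_self m))) hder0 hderm δ hδ
    simpa [hc₂def, div_mul_eq_mul_div, mul_div_assoc] using this
  obtain ⟨r₀, hr₀pos, hr₀⟩ := peano (c₂ / 2) (by linarith)
  have hV2pos : ∀ t : ℝ, |t| ≤ r₀ → t ≠ 0 → 0 < deriv (deriv V) t := by
    intro t ht htne
    have h1 := hr₀ t ht
    have h2 : |t| ^ m = t ^ m := hmeven.pow_abs t
    have h3 : 0 < |t| ^ m := pow_pos (abs_pos.mpr htne) m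
    rw [abs_le] at h1
    nlinarith
  have hSM : StrictMonoOn (deriv V) (Icc (-r₀) r₀) := by
    have SMp : StrictMonoOn (deriv V) (Icc 0 r₀) := by
      apply strictMonoOn_of_deriv_pos (convex_Icc _ _) hV1cont.continuousOn
      intro t ht
      rw [interior_Icc] at ht
      exact hV2pos t (by rw [abs_of_pos ht.1]; exact le_of_lt ht.2) (ne_of_gt ht.1)
    have SMm : StrictMonoOn (deriv V) (Icc (-r₀) 0) := by
      apply strictMonoOn_of_deriv_pos (convex_Icc _ _) hV1cont.continuousOn
      intro t ht
      rw [interior_Icc] at ht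
      exact hV2pos t (by rw [abs_of_neg ht.2]; linarith [ht.1]) (ne_of_lt ht.2)
    intro a ha b hb hab
    rcases le_or_gt b 0 with hb0 | hb0
    · exact SMm ⟨ha.1, by linarith⟩ ⟨hb.1, hb0⟩ hab
    rcases le_or_gt 0 a with ha0 | ha0
    · exact SMp ⟨ha0, ha.2⟩ ⟨by linarith, hb.2⟩ hab
    · calc deriv V a < deriv V 0 := SMm ⟨ha.1, le_of_lt ha0⟩
            ⟨by linarith [hr₀pos], le_refl 0⟩ ha0
        _ < deriv V b := SMp ⟨le_refl 0, by linarith [hr₀pos]⟩ ⟨by linarith, hb.2⟩ hb0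
  -- ### Facts about φ
  set 𝓕 := (nhds x) ×ˢ (nhdsWithin (0:ℝ) (Set.Ioi 0)) with h𝓕
  have he : ∀ i, ‖stdBasis d i‖ = 1 := by
    intro i; rw [stdBasis, Pi.norm_single]; exact norm_one
  have hφd : Differentiable ℝ φ := hφ.differentiable (by simp)
  have hG1cd : ∀ i : Fin d, ContDiff ℝ 1 (fun y => fderiv ℝ φ y (stdBasis d i)) := by
    intro i
    exact (hφ.fderiv_right (by exact_mod_cast le_refl (2:ℕ))).clm_apply contDiff_const
  have hline : ∀ (f : (Fin d → ℝ) → ℝ), Differentiable ℝ f →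
      ∀ (y v : Fin d → ℝ) (t : ℝ),
      HasDerivAt (fun s => f (y + s • v)) (fderiv ℝ f (y + t • v) v) t := by
    intro f hf y v t
    have hl : HasDerivAt (fun s : ℝ => y + s • v) v t := by
      simpa using ((hasDerivAt_id t).smul_const v).const_add y
    exact (hf _).hasFDerivAt.comp_hasDerivAt t hl
  have hG1d : ∀ i : Fin d, Differentiable ℝ (fun y => fderiv ℝ φ y (stdBasis d i)) :=
    fun i => (hG1cd i).differentiable one_ne_zero
  have hG2cont : ∀ i : Fin d, Continuous
      (fun y => fderiv ℝ (fun z => fderiv ℝ φ z (stdBasis d i)) y (stdBasis d i)) := by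
    intro i
    exact (((hG1cd i).fderiv_right (m := 0) (by norm_num)).clm_apply
      contDiff_const).continuous
  -- ### eventual facts
  have EV0 : ∀ᶠ Y : (Fin d → ℝ) × ℝ in 𝓕, 0 < Y.2 := by
    have h : ∀ᶠ ε in nhdsWithin (0:ℝ) (Set.Ioi 0), 0 < ε := by
      filter_upwards [self_mem_nhdsWithin] with ε hε using hε
    exact h.prod_inr (nhds x)
  have EVsmall : ∀ c : ℝ, 0 < c → ∀ᶠ Y : (Fin d → ℝ) × ℝ in 𝓕,
      Y.2 < c ∧ Real.sqrt Y.2 < c := by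
    intro c hc
    have h2 : ∀ᶠ Y : (Fin d → ℝ) × ℝ in 𝓕, Y.2 < min c (c ^ 2) := by
      have h : ∀ᶠ ε in nhdsWithin (0:ℝ) (Set.Ioi 0), ε < min c (c ^ 2) := by
        apply eventually_nhdsWithin_of_eventually_nhds
        have : Iio (min c (c ^ 2)) ∈ 𝓝 (0:ℝ) := Iio_mem_nhds (by positivity)
        filter_upwards [this] with ε hε using hε
      exact h.prod_inr (nhds x)
    filter_upwards [h2, EV0] with Y hY hY0
    refine ⟨lt_of_lt_of_le hY (min_le_left _ _), ?_⟩
    rw [show c = Real.sqrt (c^2) by rw [Real.sqrt_sq hc.le]]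
    exact Real.sqrt_lt_sqrt hY0.le (lt_of_lt_of_le hY (min_le_right _ _))
  have EVfst : ∀ ρ : ℝ, 0 < ρ → ∀ᶠ Y : (Fin d → ℝ) × ℝ in 𝓕, dist Y.1 x < ρ := by
    intro ρ hρ
    have h : ∀ᶠ z in 𝓝 x, dist z x < ρ :=
      Metric.eventually_nhds_iff_ball.mpr ⟨ρ, hρ, fun z hz => hz⟩
    exact h.prod_inl (nhdsWithin (0:ℝ) (Set.Ioi 0))
  -- first-order expansion
  have EV1 : ∀ (i : Fin d) (δ : ℝ), 0 < δ → ∀ᶠ Y : (Fin d → ℝ) × ℝ in 𝓕,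
      |φ (Y.1 + Real.sqrt Y.2 • stdBasis d i) - φ Y.1 - Real.sqrt Y.2 * pd φ x i|
        ≤ δ * Real.sqrt Y.2 ∧
      |φ (Y.1 - Real.sqrt Y.2 • stdBasis d i) - φ Y.1 + Real.sqrt Y.2 * pd φ x i|
        ≤ δ * Real.sqrt Y.2 := by
    intro i δ hδ
    have hc : ContinuousAt (fun y => fderiv ℝ φ y (stdBasis d i)) x :=
      (hG1cd i).continuous.continuousAt
    rcases Metric.continuousAt_iff.mp hc δ hδ with ⟨ρ, hρ, hball⟩
    filter_upwards [EVfst (ρ/2) (by linarith), EVsmall (ρ/2) (by linarith), EV0]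
      with Y hY1 hY2 hY0
    set h := Real.sqrt Y.2 with hh
    have hh0 : 0 < h := Real.sqrt_pos.mpr hY0
    have hnear : ∀ t : ℝ, |t| ≤ h → dist (Y.1 + t • stdBasis d i) x < ρ := by
      intro t ht
      have heq : (Y.1 + t • stdBasis d i) - x = (Y.1 - x) + t • stdBasis d i := by abel
      rw [dist_eq_norm, heq]
      have hn : ‖t • stdBasis d i‖ = |t| := by
        rw [norm_smul, he i, Real.norm_eq_abs, mul_one]
      calc ‖(Y.1 - x) + t • stdBasis d i‖ ≤ ‖Y.1 - x‖ + ‖t • stdBasis d i‖ := norm_add_le _ _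
        _ < ρ/2 + ρ/2 := by
            rw [hn]
            have := hY1; rw [dist_eq_norm] at this
            have h2 : |t| < ρ/2 := lt_of_le_of_lt ht hY2.2
            linarith
        _ = ρ := by ring
    have key : ∀ t : ℝ, |t| ≤ h →
        |fderiv ℝ φ (Y.1 + t • stdBasis d i) (stdBasis d i) - pd φ x i| ≤ δ := by
      intro t ht
      have := hball (hnear t ht)
      rw [Real.dist_eq] at this
      exact le_of_lt this
    constructor
    · have hmvt := stmt9_mvt_bound (F := fun s => φ (Y.1 + s • stdBasis d i) - s * pd φ x i)
        (F' := fun s => fderiv ℝ φ (Y.1 + s • stdBasis d i) (stdBasis d i) - pd φ x i)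
        (a := 0) (b := h) (le_of_lt hh0)
        (fun t _ => ((hline φ hφd Y.1 (stdBasis d i) t).sub (hasDerivAt_mul_const _)))
        (fun t ht => key t (by rw [abs_of_nonneg ht.1]; exact ht.2))
      have heq : φ (Y.1 + h • stdBasis d i) - h * pd φ x i -
          (φ (Y.1 + (0:ℝ) • stdBasis d i) - 0 * pd φ x i)
          = φ (Y.1 + h • stdBasis d i) - φ Y.1 - h * pd φ x i := by
        simp; ring
      rw [heq] at hmvt
      simpa using hmvt
    · have hmvt := stmt9_mvt_bound (F := fun s => φ (Y.1 + s • stdBasis d i) - s * pd φ x i)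
        (F' := fun s => fderiv ℝ φ (Y.1 + s • stdBasis d i) (stdBasis d i) - pd φ x i)
        (a := -h) (b := 0) (by linarith)
        (fun t _ => ((hline φ hφd Y.1 (stdBasis d i) t).sub (hasDerivAt_mul_const _)))
        (fun t ht => key t (by rw [abs_le]; constructor <;> [linarith [ht.1]; linarith [ht.2]])
        )
      have heq : φ (Y.1 + (0:ℝ) • stdBasis d i) - 0 * pd φ x i -
          (φ (Y.1 + (-h) • stdBasis d i) - (-h) * pd φ x i)
          = -(φ (Y.1 - h • stdBasis d i) - φ Y.1 + h * pd φ x i) := by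
        rw [neg_smul, ← sub_eq_add_neg]
        simp
        ring
      rw [heq, abs_neg] at hmvt
      calc |φ (Y.1 - h • stdBasis d i) - φ Y.1 + h * pd φ x i| ≤ δ * (0 - (-h)) := hmvt
        _ = δ * h := by ring
  -- second-order expansion
  have EV2 : ∀ (i : Fin d) (δ : ℝ), 0 < δ → ∀ᶠ Y : (Fin d → ℝ) × ℝ in 𝓕,
      |(φ (Y.1 + Real.sqrt Y.2 • stdBasis d i) - φ Y.1) +
       (φ (Y.1 - Real.sqrt Y.2 • stdBasis d i) - φ Y.1) - Y.2 * pd2 φ x i i|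
        ≤ δ * Y.2 := by
    intro i δ hδ
    have hc : ContinuousAt
        (fun y => fderiv ℝ (fun z => fderiv ℝ φ z (stdBasis d i)) y (stdBasis d i)) x :=
      (hG2cont i).continuousAt
    rcases Metric.continuousAt_iff.mp hc (δ/2) (by linarith) with ⟨ρ, hρ, hball⟩
    filter_upwards [EVfst (ρ/2) (by linarith), EVsmall (ρ/2) (by linarith), EV0]
      with Y hY1 hY2 hY0
    set h := Real.sqrt Y.2 with hh
    have hh0 : 0 < h := Real.sqrt_pos.mpr hY0
    have hnear : ∀ t : ℝ, |t| ≤ h → dist (Y.1 + t • stdBasis d i) x < ρ := by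
      intro t ht
      have heq : (Y.1 + t • stdBasis d i) - x = (Y.1 - x) + t • stdBasis d i := by abel
      rw [dist_eq_norm, heq]
      have hn : ‖t • stdBasis d i‖ = |t| := by
        rw [norm_smul, he i, Real.norm_eq_abs, mul_one]
      calc ‖(Y.1 - x) + t • stdBasis d i‖ ≤ ‖Y.1 - x‖ + ‖t • stdBasis d i‖ := norm_add_le _ _
        _ < ρ/2 + ρ/2 := by
            rw [hn]
            have := hY1; rw [dist_eq_norm] at this
            have h2 : |t| < ρ/2 := lt_of_le_of_lt ht hY2.2
            linarith
        _ = ρ := by ring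
    have key : ∀ t : ℝ, |t| ≤ h →
        |fderiv ℝ (fun z => fderiv ℝ φ z (stdBasis d i)) (Y.1 + t • stdBasis d i) (stdBasis d i)
          - pd2 φ x i i| ≤ δ/2 := by
      intro t ht
      have := hball (hnear t ht)
      rw [Real.dist_eq] at this
      exact le_of_lt this
    -- inner MVT : bound on difference of first derivatives
    have hfneg : ∀ s : ℝ, (fun s : ℝ => φ (Y.1 - s • stdBasis d i)) s
        = (fun s : ℝ => φ (Y.1 + s • (-(stdBasis d i)))) s := by
      intro s; simp [sub_eq_add_neg, smul_neg]
    have hstep : ∀ s : ℝ, s ∈ Icc 0 h →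
        |fderiv ℝ φ (Y.1 + s • stdBasis d i) (stdBasis d i)
          - fderiv ℝ φ (Y.1 + (-s) • stdBasis d i) (stdBasis d i)
          - 2 * s * pd2 φ x i i| ≤ δ * s := by
      intro s hs
      have hmvt := stmt9_mvt_bound
        (F := fun u => fderiv ℝ φ (Y.1 + u • stdBasis d i) (stdBasis d i) - u * pd2 φ x i i)
        (F' := fun u => fderiv ℝ (fun z => fderiv ℝ φ z (stdBasis d i))
            (Y.1 + u • stdBasis d i) (stdBasis d i) - pd2 φ x i i)
        (a := -s) (b := s) (by linarith [hs.1])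
        (fun u _ => ((hline _ (hG1d i) Y.1 (stdBasis d i) u).sub
          (hasDerivAt_mul_const _)))
        (fun u hu => key u (by
          rw [abs_le]; constructor <;> [linarith [hu.1, hs.2]; linarith [hu.2, hs.2]]))
      have heq : fderiv ℝ φ (Y.1 + s • stdBasis d i) (stdBasis d i) - s * pd2 φ x i i -
          (fderiv ℝ φ (Y.1 + (-s) • stdBasis d i) (stdBasis d i) - (-s) * pd2 φ x i i)
          = fderiv ℝ φ (Y.1 + s • stdBasis d i) (stdBasis d i)
            - fderiv ℝ φ (Y.1 + (-s) • stdBasis d i) (stdBasis d i) - 2 * s * pd2 φ x i i := by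
        ring
      rw [heq] at hmvt
      calc |_| ≤ δ/2 * (s - -s) := hmvt
        _ = δ * s := by ring
    -- outer MVT
    have houter := stmt9_mvt_bound
      (F := fun s => φ (Y.1 + s • stdBasis d i) + φ (Y.1 + s • (-(stdBasis d i)))
        - 2 * φ Y.1 - s^2 * pd2 φ x i i)
      (F' := fun s => fderiv ℝ φ (Y.1 + s • stdBasis d i) (stdBasis d i)
          - fderiv ℝ φ (Y.1 + (-s) • stdBasis d i) (stdBasis d i) - 2 * s * pd2 φ x i i)
      (a := 0) (b := h) (le_of_lt hh0)
      (fun t _ => by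
        have h1 := hline φ hφd Y.1 (stdBasis d i) t
        have h2 := hline φ hφd Y.1 (-(stdBasis d i)) t
        have h3 : HasDerivAt (fun s : ℝ => s^2 * pd2 φ x i i)
            ((2 * t ^ 1) * pd2 φ x i i) t := (hasDerivAt_pow 2 t).mul_const _
        have h4 := ((h1.add h2).sub_const (2 * φ Y.1)).sub h3
        convert h4 using 1
        · rfl
        · rfl
        · rfl
        have h5 : fderiv ℝ φ (Y.1 + t • -(stdBasis d i)) (-(stdBasis d i))
            = -(fderiv ℝ φ (Y.1 + (-t) • stdBasis d i) (stdBasis d i)) := by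
          rw [show t • -(stdBasis d i) = (-t) • stdBasis d i by rw [smul_neg, neg_smul]]
          exact (fderiv ℝ φ _).map_neg _
        rw [h5]; ring)
      (fun t ht => by
        calc |_| ≤ δ * t := hstep t ht
          _ ≤ δ * h := by nlinarith [ht.2, hδ])
    beta_reduce at houter
    have hF0 : (φ (Y.1 + (0:ℝ) • stdBasis d i) + φ (Y.1 + (0:ℝ) • (-(stdBasis d i)))
        - 2 * φ Y.1 - (0:ℝ)^2 * pd2 φ x i i) = 0 := by
      simp; ring
    rw [hF0, sub_zero] at houter
    have hFh : φ (Y.1 + h • stdBasis d i) + φ (Y.1 + h • (-(stdBasis d i)))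
        - 2 * φ Y.1 - h^2 * pd2 φ x i i
        = (φ (Y.1 + h • stdBasis d i) - φ Y.1) +
          (φ (Y.1 - h • stdBasis d i) - φ Y.1) - Y.2 * pd2 φ x i i := by
      rw [show Y.1 + h • (-(stdBasis d i)) = Y.1 - h • stdBasis d i by
        rw [smul_neg, ← sub_eq_add_neg]]
      rw [Real.sq_sqrt hY0.le]
      ring
    rw [hFh] at houter
    calc |_| ≤ δ * h * (h - 0) := houter
      _ = δ * Y.2 := by rw [sub_zero, mul_assoc, Real.mul_self_sqrt hY0.le]
  -- ### derivative of the energy and localization of the minimizer midpoint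
  have hSder : ∀ (Y : (Fin d → ℝ) × ℝ) (z : ℝ), HasDerivAt
      (fun z => ∑ i : Fin d,
        (V (φ (Y.1 + Real.sqrt Y.2 • stdBasis d i) - φ Y.1 - z) +
         V (φ (Y.1 - Real.sqrt Y.2 • stdBasis d i) - φ Y.1 - z)))
      (-(∑ i : Fin d,
        (deriv V (φ (Y.1 + Real.sqrt Y.2 • stdBasis d i) - φ Y.1 - z) +
         deriv V (φ (Y.1 - Real.sqrt Y.2 • stdBasis d i) - φ Y.1 - z)))) z := by
    intro Y z
    have hterm : ∀ a : ℝ, HasDerivAt (fun z : ℝ => V (a - z)) (-deriv V (a - z)) z := by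
      intro a
      have hi : HasDerivAt (fun z : ℝ => a - z) (-1) z := (hasDerivAt_id z).const_sub a
      have := HasDerivAt.comp z (hVd (a - z)).hasDerivAt hi
      convert this using 1
      · rfl
      · rfl
      · rfl
      ring
    have hsum := HasDerivAt.sum (u := Finset.univ)
      (A := fun i (z : ℝ) => V (φ (Y.1 + Real.sqrt Y.2 • stdBasis d i) - φ Y.1 - z) +
         V (φ (Y.1 - Real.sqrt Y.2 • stdBasis d i) - φ Y.1 - z))
      (A' := fun i => -deriv V (φ (Y.1 + Real.sqrt Y.2 • stdBasis d i) - φ Y.1 - z) +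
         -deriv V (φ (Y.1 - Real.sqrt Y.2 • stdBasis d i) - φ Y.1 - z))
      (x := z) (fun i _ => (hterm _).add (hterm _))
    convert hsum using 1
    · rfl
    · rfl
    · ext; simp [Finset.sum_apply]
    rw [← Finset.sum_neg_distrib]
    apply Finset.sum_congr rfl
    intros; ring
  have LOC : ∀ w₁ w₂ : ℝ, w₁ ≤ w₂ →
      (∀ᶠ Y : (Fin d → ℝ) × ℝ in 𝓕, 0 < ∑ i : Fin d,
        (deriv V (φ (Y.1 + Real.sqrt Y.2 • stdBasis d i) - φ Y.1 - Y.2 * w₁) +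
         deriv V (φ (Y.1 - Real.sqrt Y.2 • stdBasis d i) - φ Y.1 - Y.2 * w₁))) →
      (∀ᶠ Y : (Fin d → ℝ) × ℝ in 𝓕, (∑ i : Fin d,
        (deriv V (φ (Y.1 + Real.sqrt Y.2 • stdBasis d i) - φ Y.1 - Y.2 * w₂) +
         deriv V (φ (Y.1 - Real.sqrt Y.2 • stdBasis d i) - φ Y.1 - Y.2 * w₂))) < 0) →
      ∀ᶠ Y : (Fin d → ℝ) × ℝ in 𝓕, PhiEps V φ Y.1 Y.2 / Y.2 ∈ Icc w₁ w₂ := by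
    intro w₁ w₂ hw h1 h2
    filter_upwards [h1, h2, EV0] with Y hY1 hY2 hY0
    have hmono : Monotone (fun z : ℝ => -(∑ i : Fin d,
        (deriv V (φ (Y.1 + Real.sqrt Y.2 • stdBasis d i) - φ Y.1 - z) +
         deriv V (φ (Y.1 - Real.sqrt Y.2 • stdBasis d i) - φ Y.1 - z)))) := by
      intro z z' hzz
      simp only [neg_le_neg_iff]
      apply Finset.sum_le_sum
      intro i _
      exact add_le_add (hV1mono (by linarith)) (hV1mono (by linarith))
    have hmid := stmt9_midpoint
      (f := fun z => ∑ i : Fin d,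
        (V (φ (Y.1 + Real.sqrt Y.2 • stdBasis d i) - φ Y.1 - z) +
         V (φ (Y.1 - Real.sqrt Y.2 • stdBasis d i) - φ Y.1 - z)))
      (S' := fun z => -(∑ i : Fin d,
        (deriv V (φ (Y.1 + Real.sqrt Y.2 • stdBasis d i) - φ Y.1 - z) +
         deriv V (φ (Y.1 - Real.sqrt Y.2 • stdBasis d i) - φ Y.1 - z))))
      (z₁ := Y.2 * w₁) (z₂ := Y.2 * w₂)
      (mul_le_mul_of_nonneg_left hw hY0.le) (hSder Y) hmono
      (by simpa using hY1) (by simpa using hY2)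
    have hPhi : PhiEps V φ Y.1 Y.2 ∈ Icc (Y.2 * w₁) (Y.2 * w₂) := hmid
    rw [mem_Icc] at hPhi ⊢
    constructor
    · rw [le_div_iff₀ hY0]; linarith [hPhi.1]
    · rw [div_le_iff₀ hY0]; linarith [hPhi.2]
  -- ### sign conditions for the universal bounds
  have SIGN_hi : ∀ η : ℝ, 0 < η → ∀ᶠ Y : (Fin d → ℝ) × ℝ in 𝓕,
      (∑ i : Fin d,
        (deriv V (φ (Y.1 + Real.sqrt Y.2 • stdBasis d i) - φ Y.1 -
            Y.2 * ((⨆ j, pd2 φ x j j) / 2 + η)) +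
         deriv V (φ (Y.1 - Real.sqrt Y.2 • stdBasis d i) - φ Y.1 -
            Y.2 * ((⨆ j, pd2 φ x j j) / 2 + η)))) < 0 := by
    intro η hη
    set w : ℝ := (⨆ j, pd2 φ x j j) / 2 + η with hwdef
    have hQle : ∀ i : Fin d, pd2 φ x i i ≤ (⨆ j, pd2 φ x j j) :=
      fun i => le_ciSup (f := fun j => pd2 φ x j j) (Finite.bddAbove_range _) i
    have perI : ∀ i : Fin d, ∀ᶠ Y : (Fin d → ℝ) × ℝ in 𝓕,
        deriv V (φ (Y.1 + Real.sqrt Y.2 • stdBasis d i) - φ Y.1 - Y.2 * w) +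
        deriv V (φ (Y.1 - Real.sqrt Y.2 • stdBasis d i) - φ Y.1 - Y.2 * w) < 0 := by
      intro i
      filter_upwards [EV0, EV1 i 1 one_pos, EV2 i η hη,
        EVsmall (min (r₀ / (2 * (|pd φ x i| + 1))) (r₀ / (2 * (|w| + 1)))) (by positivity)]
        with Y h0 h1 h2 h3
      set h := Real.sqrt Y.2 with hhdef
      have hh0 : 0 < h := Real.sqrt_pos.mpr h0
      set a := φ (Y.1 + h • stdBasis d i) - φ Y.1 with hadef
      set b := φ (Y.1 - h • stdBasis d i) - φ Y.1 with hbdef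
      set z := Y.2 * w with hzdef
      have hsmall1 : h * (|pd φ x i| + 1) < r₀ / 2 := by
        have := lt_of_lt_of_le h3.2 (min_le_left _ _)
        rw [lt_div_iff₀ (by positivity)] at this
        nlinarith [abs_nonneg (pd φ x i)]
      have hsmall2 : Y.2 * (|w| + 1) < r₀ / 2 := by
        have := lt_of_lt_of_le h3.1 (min_le_right _ _)
        rw [lt_div_iff₀ (by positivity)] at this
        nlinarith [abs_nonneg w]
      have hA : |a| ≤ h * (|pd φ x i| + 1) := by
        have := h1.1
        have habs : |h * pd φ x i| = h * |pd φ x i| := by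
          rw [abs_mul, abs_of_pos hh0]
        calc |a| = |(a - h * pd φ x i) + h * pd φ x i| := by rw [sub_add_cancel]
          _ ≤ |a - h * pd φ x i| + |h * pd φ x i| := abs_add_le _ _
          _ ≤ 1 * h + h * |pd φ x i| := by rw [habs]; exact add_le_add this le_rfl
          _ = h * (|pd φ x i| + 1) := by ring
      have hB : |b| ≤ h * (|pd φ x i| + 1) := by
        have := h1.2
        have habs : |h * pd φ x i| = h * |pd φ x i| := by
          rw [abs_mul, abs_of_pos hh0]
        calc |b| = |(b + h * pd φ x i) + -(h * pd φ x i)| := by rw [add_neg_cancel_right]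
          _ ≤ |b + h * pd φ x i| + |(-(h * pd φ x i))| := abs_add_le _ _
          _ ≤ 1 * h + h * |pd φ x i| := by
              rw [abs_neg, habs]; exact add_le_add this le_rfl
          _ = h * (|pd φ x i| + 1) := by ring
      have hz : |z| ≤ r₀ / 2 := by
        rw [hzdef, abs_mul, abs_of_pos h0]
        nlinarith [abs_nonneg w, h0]
      have haz : |a - z| ≤ r₀ := by
        calc |a - z| ≤ |a| + |z| := abs_sub _ _
          _ ≤ r₀ := by linarith
      have hzb : |z - b| ≤ r₀ := by
        calc |z - b| ≤ |z| + |b| := abs_sub _ _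
          _ ≤ r₀ := by linarith
      have hab : a + b < 2 * z := by
        have hQ := mul_le_mul_of_nonneg_left (hQle i) h0.le
        have h2' := (abs_le.mp h2).2
        have : 2 * z = Y.2 * (⨆ j, pd2 φ x j j) + 2 * η * Y.2 := by
          rw [hzdef, hwdef]; ring
        nlinarith
      have hbz : b - z = -(z - b) := by ring
      rw [hbz, hV1odd]
      have hlt : deriv V (a - z) < deriv V (z - b) :=
        hSM (mem_Icc.mpr (abs_le.mp haz)) (mem_Icc.mpr (abs_le.mp hzb)) (by linarith)
      linarith
    filter_upwards [Filter.eventually_all.mpr perI] with Y hY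
    exact Finset.sum_neg (fun i _ => hY i) Finset.univ_nonempty
  have SIGN_lo : ∀ η : ℝ, 0 < η → ∀ᶠ Y : (Fin d → ℝ) × ℝ in 𝓕,
      0 < (∑ i : Fin d,
        (deriv V (φ (Y.1 + Real.sqrt Y.2 • stdBasis d i) - φ Y.1 -
            Y.2 * ((⨅ j, pd2 φ x j j) / 2 - η)) +
         deriv V (φ (Y.1 - Real.sqrt Y.2 • stdBasis d i) - φ Y.1 -
            Y.2 * ((⨅ j, pd2 φ x j j) / 2 - η)))) := by
    intro η hη
    set w : ℝ := (⨅ j, pd2 φ x j j) / 2 - η with hwdef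
    have hQge : ∀ i : Fin d, (⨅ j, pd2 φ x j j) ≤ pd2 φ x i i :=
      fun i => ciInf_le (f := fun j => pd2 φ x j j) (Finite.bddBelow_range _) i
    have perI : ∀ i : Fin d, ∀ᶠ Y : (Fin d → ℝ) × ℝ in 𝓕,
        0 < deriv V (φ (Y.1 + Real.sqrt Y.2 • stdBasis d i) - φ Y.1 - Y.2 * w) +
        deriv V (φ (Y.1 - Real.sqrt Y.2 • stdBasis d i) - φ Y.1 - Y.2 * w) := by
      intro i
      filter_upwards [EV0, EV1 i 1 one_pos, EV2 i η hη,
        EVsmall (min (r₀ / (2 * (|pd φ x i| + 1))) (r₀ / (2 * (|w| + 1)))) (by positivity)]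
        with Y h0 h1 h2 h3
      set h := Real.sqrt Y.2 with hhdef
      have hh0 : 0 < h := Real.sqrt_pos.mpr h0
      set a := φ (Y.1 + h • stdBasis d i) - φ Y.1 with hadef
      set b := φ (Y.1 - h • stdBasis d i) - φ Y.1 with hbdef
      set z := Y.2 * w with hzdef
      have hsmall1 : h * (|pd φ x i| + 1) < r₀ / 2 := by
        have := lt_of_lt_of_le h3.2 (min_le_left _ _)
        rw [lt_div_iff₀ (by positivity)] at this
        nlinarith [abs_nonneg (pd φ x i)]
      have hsmall2 : Y.2 * (|w| + 1) < r₀ / 2 := by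
        have := lt_of_lt_of_le h3.1 (min_le_right _ _)
        rw [lt_div_iff₀ (by positivity)] at this
        nlinarith [abs_nonneg w]
      have hA : |a| ≤ h * (|pd φ x i| + 1) := by
        have := h1.1
        have habs : |h * pd φ x i| = h * |pd φ x i| := by
          rw [abs_mul, abs_of_pos hh0]
        calc |a| = |(a - h * pd φ x i) + h * pd φ x i| := by rw [sub_add_cancel]
          _ ≤ |a - h * pd φ x i| + |h * pd φ x i| := abs_add_le _ _
          _ ≤ 1 * h + h * |pd φ x i| := by rw [habs]; exact add_le_add this le_rfl
          _ = h * (|pd φ x i| + 1) := by ring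
      have hB : |b| ≤ h * (|pd φ x i| + 1) := by
        have := h1.2
        have habs : |h * pd φ x i| = h * |pd φ x i| := by
          rw [abs_mul, abs_of_pos hh0]
        calc |b| = |(b + h * pd φ x i) + -(h * pd φ x i)| := by rw [add_neg_cancel_right]
          _ ≤ |b + h * pd φ x i| + |(-(h * pd φ x i))| := abs_add_le _ _
          _ ≤ 1 * h + h * |pd φ x i| := by
              rw [abs_neg, habs]; exact add_le_add this le_rfl
          _ = h * (|pd φ x i| + 1) := by ring
      have hz : |z| ≤ r₀ / 2 := by
        rw [hzdef, abs_mul, abs_of_pos h0]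
        nlinarith [abs_nonneg w, h0]
      have haz : |a - z| ≤ r₀ := by
        calc |a - z| ≤ |a| + |z| := abs_sub _ _
          _ ≤ r₀ := by linarith
      have hzb : |z - b| ≤ r₀ := by
        calc |z - b| ≤ |z| + |b| := abs_sub _ _
          _ ≤ r₀ := by linarith
      have hab : 2 * z < a + b := by
        have hQ := mul_le_mul_of_nonneg_left (hQge i) h0.le
        have h2' := (abs_le.mp h2).1
        have : 2 * z = Y.2 * (⨅ j, pd2 φ x j j) - 2 * η * Y.2 := by
          rw [hzdef, hwdef]; ring
        nlinarith
      have hbz : b - z = -(z - b) := by ring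
      rw [hbz, hV1odd]
      have hlt : deriv V (z - b) < deriv V (a - z) :=
        hSM (mem_Icc.mpr (abs_le.mp hzb)) (mem_Icc.mpr (abs_le.mp haz)) (by linarith)
      linarith
    filter_upwards [Filter.eventually_all.mpr perI] with Y hY
    exact Finset.sum_pos (fun i _ => hY i) Finset.univ_nonempty
  -- ### part 1 assembly
  have main1 : ∀ η : ℝ, 0 < η → ∀ᶠ Y : (Fin d → ℝ) × ℝ in 𝓕,
      PhiEps V φ Y.1 Y.2 / Y.2 ∈
        Icc ((⨅ j, pd2 φ x j j) / 2 - η) ((⨆ j, pd2 φ x j j) / 2 + η) := by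
    intro η hη
    have hii : (⨅ j, pd2 φ x j j) ≤ (⨆ j, pd2 φ x j j) :=
      le_trans (ciInf_le (f := fun j => pd2 φ x j j) (Finite.bddBelow_range _) (Classical.arbitrary (Fin d)))
        (le_ciSup (f := fun j => pd2 φ x j j) (Finite.bddAbove_range _) _)
    exact LOC _ _ (by linarith) (SIGN_lo η hη) (SIGN_hi η hη)
  haveI hNB : ((nhds x) ×ˢ (nhdsWithin (0:ℝ) (Set.Ioi 0))).NeBot :=
    Filter.prod_neBot.mpr ⟨inferInstance, inferInstance⟩
  have hba : IsBoundedUnder (· ≤ ·) 𝓕 (fun q : (Fin d → ℝ) × ℝ => PhiEps V φ q.1 q.2 / q.2) :=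
    isBoundedUnder_of_eventually_le (a := (⨆ j, pd2 φ x j j) / 2 + 1)
      ((main1 1 one_pos).mono fun Y hY => hY.2)
  have hbb : IsBoundedUnder (· ≥ ·) 𝓕 (fun q : (Fin d → ℝ) × ℝ => PhiEps V φ q.1 q.2 / q.2) :=
    isBoundedUnder_of_eventually_ge (a := (⨅ j, pd2 φ x j j) / 2 - 1)
      ((main1 1 one_pos).mono fun Y hY => hY.1)
  constructor
  · refine ⟨?_, liminf_le_limsup hba hbb, ?_⟩
    · have step : ∀ η : ℝ, 0 < η → (⨅ j, pd2 φ x j j) / 2 - η ≤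
          liminf (fun q : (Fin d → ℝ) × ℝ => PhiEps V φ q.1 q.2 / q.2) 𝓕 := by
        intro η hη
        exact le_liminf_of_le hba.isCoboundedUnder_ge
          ((main1 η hη).mono fun Y hY => hY.1)
      by_contra hcon
      push_neg at hcon
      have := step (((⨅ j, pd2 φ x j j) / 2 -
        liminf (fun q : (Fin d → ℝ) × ℝ => PhiEps V φ q.1 q.2 / q.2) 𝓕) / 2) (by linarith)
      linarith
    · have step : ∀ η : ℝ, 0 < η →
          limsup (fun q : (Fin d → ℝ) × ℝ => PhiEps V φ q.1 q.2 / q.2) 𝓕 ≤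
            (⨆ j, pd2 φ x j j) / 2 + η := by
        intro η hη
        exact limsup_le_of_le hbb.isCoboundedUnder_le
          ((main1 η hη).mono fun Y hY => hY.2)
      by_contra hcon
      push_neg at hcon
      have := step ((limsup (fun q : (Fin d → ℝ) × ℝ => PhiEps V φ q.1 q.2 / q.2) 𝓕 -
        (⨆ j, pd2 φ x j j) / 2) / 2) (by linarith)
      linarith
  -- ### part 2
  intro hg
  have hpne : ∃ i, pd φ x i ≠ 0 := by
    by_contra hcon
    push_neg at hcon
    exact hg (funext fun i => hcon i)
  have hP : 0 < ∑ i : Fin d, |pd φ x i| ^ m := by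
    obtain ⟨i0, hi0⟩ := hpne
    exact Finset.sum_pos' (fun i _ => by positivity)
      ⟨i0, Finset.mem_univ _, pow_pos (abs_pos.mpr hi0) m⟩
  set L : ℝ := (∑ i : Fin d, |pd φ x i| ^ m * pd2 φ x i i) /
      (2 * ∑ i : Fin d, |pd φ x i| ^ m) with hLdef
  -- the quantitative expansion
  have core2 : ∀ w δ : ℝ, 0 < δ → ∀ᶠ Y : (Fin d → ℝ) × ℝ in 𝓕,
      |(∑ i : Fin d,
          (deriv V (φ (Y.1 + Real.sqrt Y.2 • stdBasis d i) - φ Y.1 - Y.2 * w) +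
           deriv V (φ (Y.1 - Real.sqrt Y.2 • stdBasis d i) - φ Y.1 - Y.2 * w)))
        - Y.2 * (Real.sqrt Y.2) ^ m *
            (∑ i : Fin d, c₂ * |pd φ x i| ^ m * (pd2 φ x i i - 2 * w))|
      ≤ δ * (Y.2 * (Real.sqrt Y.2) ^ m) := by
    intro w δ hδ
    set KK : Fin d → ℝ := fun i =>
      (c₂ + 1) * ((|pd φ x i| + 1) ^ m + 1) +
      ((|pd φ x i| + 1) ^ m + 1) * |pd2 φ x i i - 2 * w| with hKKdef
    have hKKi : ∀ i, KK i = (c₂ + 1) * ((|pd φ x i| + 1) ^ m + 1) +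
      ((|pd φ x i| + 1) ^ m + 1) * |pd2 φ x i i - 2 * w| := fun i => by rw [hKKdef]
    have hKKnn : ∀ i, 0 ≤ KK i := by
      intro i
      rw [hKKi i]
      have h1 : (0:ℝ) ≤ (|pd φ x i| + 1) ^ m + 1 := by positivity
      have h2 : (0:ℝ) ≤ |pd2 φ x i i - 2 * w| := abs_nonneg _
      nlinarith [hc₂.le, mul_nonneg h1 h2]
    set Ktot : ℝ := (∑ i : Fin d, KK i) + 1 with hKtotdef
    have hKtot : 0 < Ktot := by
      have := Finset.sum_nonneg (fun i (_ : i ∈ Finset.univ) => hKKnn i)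
      rw [hKtotdef]; linarith
    set δ' : ℝ := min 1 (δ / Ktot) with hδ'def
    have hδ'pos : 0 < δ' := lt_min one_pos (div_pos hδ hKtot)
    have hδ'le1 : δ' ≤ 1 := min_le_left _ _
    have hδ'K : δ' * (∑ i : Fin d, KK i) ≤ δ := by
      have h1 : δ' ≤ δ / Ktot := min_le_right _ _
      have h2 : (∑ i : Fin d, KK i) ≤ Ktot := by rw [hKtotdef]; linarith
      have h3 : (0:ℝ) ≤ ∑ i : Fin d, KK i :=
        Finset.sum_nonneg (fun i _ => hKKnn i)
      calc δ' * (∑ i : Fin d, KK i) ≤ (δ / Ktot) * Ktot := by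
            apply mul_le_mul h1 h2 h3 (le_of_lt (div_pos hδ hKtot))
        _ = δ := div_mul_cancel₀ δ (ne_of_gt hKtot)
    obtain ⟨r, hrpos, hr⟩ := peano δ' hδ'pos
    have perI : ∀ i : Fin d, ∀ᶠ Y : (Fin d → ℝ) × ℝ in 𝓕,
        |(deriv V (φ (Y.1 + Real.sqrt Y.2 • stdBasis d i) - φ Y.1 - Y.2 * w) +
          deriv V (φ (Y.1 - Real.sqrt Y.2 • stdBasis d i) - φ Y.1 - Y.2 * w))
          - Y.2 * (Real.sqrt Y.2) ^ m * (c₂ * |pd φ x i| ^ m * (pd2 φ x i i - 2 * w))|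
        ≤ δ' * (Y.2 * (Real.sqrt Y.2) ^ m) * KK i := by
      intro i
      have hcontu : ContinuousAt (fun u : ℝ => c₂ * u ^ m) (pd φ x i) :=
        (continuous_const.mul (continuous_pow m)).continuousAt
      rcases Metric.continuousAt_iff.mp hcontu δ' hδ'pos with ⟨δ₁', hδ₁'pos, hball⟩
      set δ₁ : ℝ := min 1 (δ₁' / 2) with hδ₁def
      have hδ₁pos : 0 < δ₁ := lt_min one_pos (by linarith)
      have hδ₁le1 : δ₁ ≤ 1 := min_le_left _ _
      have hδ₁prop : ∀ u : ℝ, |u - pd φ x i| ≤ δ₁ →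
          |c₂ * u ^ m - c₂ * pd φ x i ^ m| ≤ δ' := by
        intro u hu
        have hlt : dist u (pd φ x i) < δ₁' := by
          rw [Real.dist_eq]
          have := min_le_right 1 (δ₁' / 2)
          have : δ₁ ≤ δ₁' / 2 := this
          linarith
        have := hball hlt
        rw [Real.dist_eq] at this
        exact this.le
      filter_upwards [EV0, EV1 i (δ₁ / 2) (by linarith), EV2 i δ' hδ'pos,
        EVsmall (min (r / (|pd φ x i| + 1)) (δ₁ / (2 * (|w| + 1)))) (by positivity)]
        with Y h0 h1 h2 h3
      set h := Real.sqrt Y.2 with hhdef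
      have hh0 : 0 < h := Real.sqrt_pos.mpr h0
      set a := φ (Y.1 + h • stdBasis d i) - φ Y.1 with hadef
      set b := φ (Y.1 - h • stdBasis d i) - φ Y.1 with hbdef
      set z := Y.2 * w with hzdef
      have hhr : h * (|pd φ x i| + 1) < r := by
        have := lt_of_lt_of_le h3.2 (min_le_left _ _)
        rw [lt_div_iff₀ (by positivity)] at this
        exact this
      have hzsmall : |z| ≤ δ₁ / 2 * h := by
        have hb1 : h * (|w| + 1) < δ₁ / 2 := by
          have := lt_of_lt_of_le h3.2 (min_le_right _ _)
          rw [lt_div_iff₀ (by positivity)] at this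
          linarith
        have hy2 : Y.2 = h * h := (Real.mul_self_sqrt h0.le).symm
        rw [hzdef, abs_mul, abs_of_pos h0, hy2]
        nlinarith [abs_nonneg w, hh0]
      set α := z - b with hαdef
      set β := a - z with hβdef
      have habsp : |h * pd φ x i| = h * |pd φ x i| := by
        rw [abs_mul, abs_of_pos hh0]
      have hβd : |β - h * pd φ x i| ≤ δ₁ * h := by
        have e : β - h * pd φ x i = (a - h * pd φ x i) + -z := by
          rw [hβdef]; ring
        rw [e]
        calc |(a - h * pd φ x i) + -z| ≤ |a - h * pd φ x i| + |(-z)| := abs_add_le _ _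
          _ ≤ δ₁ / 2 * h + δ₁ / 2 * h := by
              rw [abs_neg]; exact add_le_add h1.1 hzsmall
          _ = δ₁ * h := by ring
      have hαd : |α - h * pd φ x i| ≤ δ₁ * h := by
        have e : α - h * pd φ x i = z + -(b + h * pd φ x i) := by
          rw [hαdef]; ring
        rw [e]
        calc |z + -(b + h * pd φ x i)| ≤ |z| + |(-(b + h * pd φ x i))| := abs_add_le _ _
          _ ≤ δ₁ / 2 * h + δ₁ / 2 * h := by
              rw [abs_neg]; exact add_le_add hzsmall h1.2
          _ = δ₁ * h := by ring
      obtain ⟨ξ, hξu, hξeq⟩ : ∃ ξ ∈ uIcc α β,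
          deriv V β - deriv V α = deriv (deriv V) ξ * (β - α) := by
        rcases lt_trichotomy α β with hc | hc | hc
        · obtain ⟨ξ, hξ, heq⟩ := exists_hasDerivAt_eq_slope (deriv V) (deriv (deriv V)) hc
            hV1cont.continuousOn (fun u _ => hV2hasD u)
          refine ⟨ξ, ?_, ?_⟩
          · rw [uIcc_of_le hc.le]; exact Ioo_subset_Icc_self hξ
          · rw [heq, div_mul_cancel₀ _ (sub_ne_zero.mpr (ne_of_gt hc))]
        · exact ⟨α, left_mem_uIcc, by rw [hc]; ring⟩
        · obtain ⟨ξ, hξ, heq⟩ := exists_hasDerivAt_eq_slope (deriv V) (deriv (deriv V)) hc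
            hV1cont.continuousOn (fun u _ => hV2hasD u)
          refine ⟨ξ, ?_, ?_⟩
          · rw [uIcc_of_ge hc.le]; exact Ioo_subset_Icc_self hξ
          · rw [heq, div_mul_eq_mul_div, eq_div_iff (sub_ne_zero.mpr (ne_of_gt hc))]
            ring
      have hξd : |ξ - h * pd φ x i| ≤ δ₁ * h := stmt9_abs_uIcc hαd hβd hξu
      have hξabs : |ξ| ≤ h * (|pd φ x i| + 1) := by
        calc |ξ| = |(ξ - h * pd φ x i) + h * pd φ x i| := by rw [sub_add_cancel]
          _ ≤ |ξ - h * pd φ x i| + |h * pd φ x i| := abs_add_le _ _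
          _ ≤ δ₁ * h + h * |pd φ x i| := by rw [habsp]; exact add_le_add hξd le_rfl
          _ ≤ h * (|pd φ x i| + 1) := by
              have := mul_nonneg (by linarith [hδ₁le1] : (0:ℝ) ≤ 1 - δ₁) hh0.le
              nlinarith
      have hξr : |ξ| ≤ r := le_of_lt (lt_of_le_of_lt hξabs hhr)
      have hpeano := hr ξ hξr
      have hxipow : |ξ| ^ m ≤ h ^ m * (|pd φ x i| + 1) ^ m := by
        calc |ξ| ^ m ≤ (h * (|pd φ x i| + 1)) ^ m :=
              pow_le_pow_left₀ (abs_nonneg _) hξabs m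
          _ = h ^ m * (|pd φ x i| + 1) ^ m := mul_pow _ _ _
      set u := ξ / h with hudef
      have hu : |u - pd φ x i| ≤ δ₁ := by
        have e : u - pd φ x i = (ξ - h * pd φ x i) / h := by
          rw [hudef]; field_simp
        rw [e, abs_div, abs_of_pos hh0, div_le_iff₀ hh0]
        linarith [hξd]
      have hξum : ξ ^ m = h ^ m * u ^ m := by
        rw [show ξ = h * u by rw [hudef]; field_simp, mul_pow]
      have hVu := hδ₁prop u hu
      have hVnu : |deriv (deriv V) ξ - h ^ m * (c₂ * pd φ x i ^ m)|
          ≤ δ' * h ^ m * ((|pd φ x i| + 1) ^ m + 1) := by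
        have e1 : deriv (deriv V) ξ - h ^ m * (c₂ * pd φ x i ^ m)
            = (deriv (deriv V) ξ - c₂ * ξ ^ m) +
              h ^ m * (c₂ * u ^ m - c₂ * pd φ x i ^ m) := by
          rw [hξum]; ring
        rw [e1]
        have hb1 : |h ^ m * (c₂ * u ^ m - c₂ * pd φ x i ^ m)| ≤ h ^ m * δ' := by
          rw [abs_mul, abs_of_nonneg (pow_nonneg hh0.le m)]
          exact mul_le_mul_of_nonneg_left hVu (pow_nonneg hh0.le m)
        have hb2 : |deriv (deriv V) ξ - c₂ * ξ ^ m| ≤ δ' * (h ^ m * (|pd φ x i| + 1) ^ m) :=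
          le_trans hpeano (mul_le_mul_of_nonneg_left hxipow hδ'pos.le)
        calc |(deriv (deriv V) ξ - c₂ * ξ ^ m) +
              h ^ m * (c₂ * u ^ m - c₂ * pd φ x i ^ m)|
            ≤ |deriv (deriv V) ξ - c₂ * ξ ^ m| +
              |h ^ m * (c₂ * u ^ m - c₂ * pd φ x i ^ m)| := abs_add_le _ _
          _ ≤ δ' * (h ^ m * (|pd φ x i| + 1) ^ m) + h ^ m * δ' := add_le_add hb2 hb1
          _ = δ' * h ^ m * ((|pd φ x i| + 1) ^ m + 1) := by ring
      have hVabs : |deriv (deriv V) ξ|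
          ≤ h ^ m * ((c₂ + 1) * ((|pd φ x i| + 1) ^ m + 1)) := by
        have hTabs : |h ^ m * (c₂ * pd φ x i ^ m)| = h ^ m * (c₂ * |pd φ x i| ^ m) := by
          rw [abs_mul, abs_of_nonneg (pow_nonneg hh0.le m), abs_mul, abs_of_pos hc₂, abs_pow]
        have hpm : |pd φ x i| ^ m ≤ (|pd φ x i| + 1) ^ m :=
          pow_le_pow_left₀ (abs_nonneg _) (by linarith) m
        calc |deriv (deriv V) ξ|
            = |(deriv (deriv V) ξ - h ^ m * (c₂ * pd φ x i ^ m)) +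
              h ^ m * (c₂ * pd φ x i ^ m)| := by rw [sub_add_cancel]
          _ ≤ |deriv (deriv V) ξ - h ^ m * (c₂ * pd φ x i ^ m)| +
              |h ^ m * (c₂ * pd φ x i ^ m)| := abs_add_le _ _
          _ ≤ δ' * h ^ m * ((|pd φ x i| + 1) ^ m + 1) +
              h ^ m * (c₂ * |pd φ x i| ^ m) := by rw [hTabs]; exact add_le_add hVnu le_rfl
          _ ≤ h ^ m * ((c₂ + 1) * ((|pd φ x i| + 1) ^ m + 1)) := by
              have hhm : (0:ℝ) ≤ h ^ m := pow_nonneg hh0.le m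
              have h1' : (0:ℝ) ≤ (|pd φ x i| + 1) ^ m + 1 := by positivity
              have hA := mul_nonneg (mul_nonneg
                (by linarith [hδ'le1] : (0:ℝ) ≤ 1 - δ') hhm) h1'
              have hB := mul_nonneg (mul_nonneg hc₂.le hhm)
                (by linarith [hpm] : (0:ℝ) ≤ (|pd φ x i| + 1) ^ m + 1 - |pd φ x i| ^ m)
              linarith [hA, hB]
      have hcB : |(β - α) - Y.2 * (pd2 φ x i i - 2 * w)| ≤ δ' * Y.2 := by
        have e : (β - α) - Y.2 * (pd2 φ x i i - 2 * w)
            = a - h * 0 + (b - h * 0) - Y.2 * pd2 φ x i i - 0 := by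
          rw [hβdef, hαdef, hzdef]; ring
        have e2 : (β - α) - Y.2 * (pd2 φ x i i - 2 * w)
            = (a + b - Y.2 * pd2 φ x i i) := by rw [hβdef, hαdef, hzdef]; ring
        rw [e2]
        exact h2
      -- final per-i computation
      rw [show b - z = -(z - b) by ring, ← hαdef, hV1odd]
      have efin : deriv V β + -deriv V α -
          Y.2 * h ^ m * (c₂ * |pd φ x i| ^ m * (pd2 φ x i i - 2 * w))
          = deriv (deriv V) ξ * ((β - α) - Y.2 * (pd2 φ x i i - 2 * w)) +
            (deriv (deriv V) ξ - h ^ m * (c₂ * pd φ x i ^ m)) *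
              (Y.2 * (pd2 φ x i i - 2 * w)) := by
        have habs2 : |pd φ x i| ^ m = pd φ x i ^ m := hmeven.pow_abs _
        rw [habs2]
        have : deriv V β + -deriv V α = deriv V β - deriv V α := by ring
        rw [this, hξeq]
        ring
      rw [efin]
      have hE : |Y.2 * (pd2 φ x i i - 2 * w)| = Y.2 * |pd2 φ x i i - 2 * w| := by
        rw [abs_mul, abs_of_pos h0]
      calc |deriv (deriv V) ξ * ((β - α) - Y.2 * (pd2 φ x i i - 2 * w)) +
            (deriv (deriv V) ξ - h ^ m * (c₂ * pd φ x i ^ m)) *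
              (Y.2 * (pd2 φ x i i - 2 * w))|
          ≤ |deriv (deriv V) ξ * ((β - α) - Y.2 * (pd2 φ x i i - 2 * w))| +
            |(deriv (deriv V) ξ - h ^ m * (c₂ * pd φ x i ^ m)) *
              (Y.2 * (pd2 φ x i i - 2 * w))| := abs_add_le _ _
        _ = |deriv (deriv V) ξ| * |(β - α) - Y.2 * (pd2 φ x i i - 2 * w)| +
            |deriv (deriv V) ξ - h ^ m * (c₂ * pd φ x i ^ m)| *
              |Y.2 * (pd2 φ x i i - 2 * w)| := by rw [abs_mul, abs_mul]
        _ ≤ (h ^ m * ((c₂ + 1) * ((|pd φ x i| + 1) ^ m + 1))) * (δ' * Y.2) +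
            (δ' * h ^ m * ((|pd φ x i| + 1) ^ m + 1)) *
              (Y.2 * |pd2 φ x i i - 2 * w|) := by
            apply add_le_add
            · exact mul_le_mul hVabs hcB (abs_nonneg _) (by positivity)
            · rw [hE]
              exact mul_le_mul_of_nonneg_right hVnu (by positivity)
        _ = δ' * (Y.2 * h ^ m) * KK i := by rw [hKKi i]; ring
    filter_upwards [Filter.eventually_all.mpr perI, EV0] with Y hY h0
    have hh0 : 0 < Real.sqrt Y.2 := Real.sqrt_pos.mpr h0
    have hX : (0:ℝ) ≤ Y.2 * (Real.sqrt Y.2) ^ m := by positivity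
    calc |(∑ i : Fin d,
          (deriv V (φ (Y.1 + Real.sqrt Y.2 • stdBasis d i) - φ Y.1 - Y.2 * w) +
           deriv V (φ (Y.1 - Real.sqrt Y.2 • stdBasis d i) - φ Y.1 - Y.2 * w)))
        - Y.2 * (Real.sqrt Y.2) ^ m *
            (∑ i : Fin d, c₂ * |pd φ x i| ^ m * (pd2 φ x i i - 2 * w))|
        = |∑ i : Fin d,
            ((deriv V (φ (Y.1 + Real.sqrt Y.2 • stdBasis d i) - φ Y.1 - Y.2 * w) +
              deriv V (φ (Y.1 - Real.sqrt Y.2 • stdBasis d i) - φ Y.1 - Y.2 * w))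
            - Y.2 * (Real.sqrt Y.2) ^ m *
                (c₂ * |pd φ x i| ^ m * (pd2 φ x i i - 2 * w)))| := by
          rw [Finset.sum_sub_distrib, ← Finset.mul_sum]
      _ ≤ ∑ i : Fin d,
            |(deriv V (φ (Y.1 + Real.sqrt Y.2 • stdBasis d i) - φ Y.1 - Y.2 * w) +
              deriv V (φ (Y.1 - Real.sqrt Y.2 • stdBasis d i) - φ Y.1 - Y.2 * w))
            - Y.2 * (Real.sqrt Y.2) ^ m *
                (c₂ * |pd φ x i| ^ m * (pd2 φ x i i - 2 * w))| :=
          Finset.abs_sum_le_sum_abs _ _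
      _ ≤ ∑ i : Fin d, δ' * (Y.2 * (Real.sqrt Y.2) ^ m) * KK i :=
          Finset.sum_le_sum (fun i _ => hY i)
      _ = (Y.2 * (Real.sqrt Y.2) ^ m) * (δ' * ∑ i : Fin d, KK i) := by
          rw [Finset.mul_sum, Finset.mul_sum]
          apply Finset.sum_congr rfl
          intros; ring
      _ ≤ (Y.2 * (Real.sqrt Y.2) ^ m) * δ := mul_le_mul_of_nonneg_left hδ'K hX
      _ = δ * (Y.2 * (Real.sqrt Y.2) ^ m) := by ring
  -- value of the weighted sum at shifted points
  have hGval : ∀ w : ℝ, (∑ i : Fin d, c₂ * |pd φ x i| ^ m * (pd2 φ x i i - 2 * w))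
      = c₂ * (2 * ∑ i : Fin d, |pd φ x i| ^ m) * (L - w) := by
    intro w
    have e1 : ∀ i : Fin d, c₂ * |pd φ x i| ^ m * (pd2 φ x i i - 2 * w)
        = c₂ * (|pd φ x i| ^ m * pd2 φ x i i) - (2 * w * c₂) * |pd φ x i| ^ m :=
      fun i => by ring
    rw [Finset.sum_congr rfl (fun i _ => e1 i), Finset.sum_sub_distrib,
      ← Finset.mul_sum, ← Finset.mul_sum]
    have e2 : (∑ i : Fin d, |pd φ x i| ^ m * pd2 φ x i i)
        = L * (2 * ∑ i : Fin d, |pd φ x i| ^ m) := by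
      rw [hLdef, div_mul_cancel₀]
      exact ne_of_gt (by linarith)
    rw [e2]
    ring
  have sign_pos : ∀ w : ℝ, w < L → ∀ᶠ Y : (Fin d → ℝ) × ℝ in 𝓕,
      0 < ∑ i : Fin d,
        (deriv V (φ (Y.1 + Real.sqrt Y.2 • stdBasis d i) - φ Y.1 - Y.2 * w) +
         deriv V (φ (Y.1 - Real.sqrt Y.2 • stdBasis d i) - φ Y.1 - Y.2 * w)) := by
    intro w hw
    have hG : 0 < ∑ i : Fin d, c₂ * |pd φ x i| ^ m * (pd2 φ x i i - 2 * w) := by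
      rw [hGval w]
      have hLw : 0 < L - w := by linarith
      exact mul_pos (mul_pos hc₂ (by linarith)) hLw
    filter_upwards [core2 w
      ((∑ i : Fin d, c₂ * |pd φ x i| ^ m * (pd2 φ x i i - 2 * w)) / 2) (half_pos hG), EV0]
      with Y hb h0
    have hh0 : 0 < Real.sqrt Y.2 := Real.sqrt_pos.mpr h0
    have hX : (0:ℝ) < Y.2 * (Real.sqrt Y.2) ^ m := mul_pos h0 (pow_pos hh0 m)
    have h1 := (abs_le.mp hb).1
    have hpos : (0:ℝ) < (Y.2 * (Real.sqrt Y.2) ^ m) *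
        ((∑ i : Fin d, c₂ * |pd φ x i| ^ m * (pd2 φ x i i - 2 * w)) / 2) :=
      mul_pos hX (half_pos hG)
    have e : (Y.2 * (Real.sqrt Y.2) ^ m) *
        (∑ i : Fin d, c₂ * |pd φ x i| ^ m * (pd2 φ x i i - 2 * w))
        - (∑ i : Fin d, c₂ * |pd φ x i| ^ m * (pd2 φ x i i - 2 * w)) / 2 *
          (Y.2 * (Real.sqrt Y.2) ^ m)
        = (Y.2 * (Real.sqrt Y.2) ^ m) *
          ((∑ i : Fin d, c₂ * |pd φ x i| ^ m * (pd2 φ x i i - 2 * w)) / 2) := by ring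
    linarith [h1, hpos, e]
  have sign_neg : ∀ w : ℝ, L < w → ∀ᶠ Y : (Fin d → ℝ) × ℝ in 𝓕,
      (∑ i : Fin d,
        (deriv V (φ (Y.1 + Real.sqrt Y.2 • stdBasis d i) - φ Y.1 - Y.2 * w) +
         deriv V (φ (Y.1 - Real.sqrt Y.2 • stdBasis d i) - φ Y.1 - Y.2 * w))) < 0 := by
    intro w hw
    have hG : (∑ i : Fin d, c₂ * |pd φ x i| ^ m * (pd2 φ x i i - 2 * w)) < 0 := by
      rw [hGval w]
      have h1 : L - w < 0 := by linarith
      have h2 : 0 < c₂ * (2 * ∑ i : Fin d, |pd φ x i| ^ m) := by positivity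
      nlinarith
    filter_upwards [core2 w (-(∑ i : Fin d, c₂ * |pd φ x i| ^ m * (pd2 φ x i i - 2 * w)) / 2)
      (by linarith), EV0] with Y hb h0
    have hh0 : 0 < Real.sqrt Y.2 := Real.sqrt_pos.mpr h0
    have hX : (0:ℝ) < Y.2 * (Real.sqrt Y.2) ^ m := mul_pos h0 (pow_pos hh0 m)
    have h1 := (abs_le.mp hb).2
    have hneg : (Y.2 * (Real.sqrt Y.2) ^ m) *
        ((∑ i : Fin d, c₂ * |pd φ x i| ^ m * (pd2 φ x i i - 2 * w)) / 2) < 0 :=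
      mul_neg_of_pos_of_neg hX (by linarith)
    have e : (Y.2 * (Real.sqrt Y.2) ^ m) *
        (∑ i : Fin d, c₂ * |pd φ x i| ^ m * (pd2 φ x i i - 2 * w))
        + (-(∑ i : Fin d, c₂ * |pd φ x i| ^ m * (pd2 φ x i i - 2 * w)) / 2) *
          (Y.2 * (Real.sqrt Y.2) ^ m)
        = (Y.2 * (Real.sqrt Y.2) ^ m) *
          ((∑ i : Fin d, c₂ * |pd φ x i| ^ m * (pd2 φ x i i - 2 * w)) / 2) := by ring
    linarith [h1, hneg, e]
  rw [Metric.tendsto_nhds]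
  intro η hη
  filter_upwards [LOC (L - η / 2) (L + η / 2) (by linarith)
    (sign_pos (L - η / 2) (by linarith)) (sign_neg (L + η / 2) (by linarith))] with Y hY
  rw [mem_Icc] at hY
  rw [Real.dist_eq, abs_sub_lt_iff]
  constructor <;> linarith [hY.1, hY.2]
end

section
/- Let δ ∈ (0,1) and V(x) = |x|^{2+δ}. Fix φ ∈ C²(ℝ^d) and, for y ∈ ℝ^d and ε > 0, let Φ^ε(y) denote the midpoint of the set of minimizers of the convex function z ↦ Σ_{i=1}^d [V(φ(y + √ε e_i) − φ(y) − z) + V(φ(y − √ε e_i) − φ(y) − z)]. Then for every x ∈ ℝ^d: (1/2)·min_i φ_{x_ix_i}(x) ≤ liminf_{y→x, ε→0⁺} Φ^ε(y)/ε ≤ limsup_{y→x, ε→0⁺} Φ^ε(y)/ε ≤ (1/2)·max_i φ_{x_ix_i}(x). Moreover, if Dφ(x) ≠ 0, then lim_{y→x, ε→0⁺} Φ^ε(y)/ε = ( Σ_{i=1}^d |φ_{x_i}(x)|^{δ} φ_{x_ix_i}(x) ) / ( 2·Σ_{i=1}^d |φ_{x_i}(x)|^{δ} ). -/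
open Filter Set

noncomputable def chi (δ t : ℝ) : ℝ := t * |t| ^ δ

lemma chi_zero (δ : ℝ) : chi δ 0 = 0 := by simp [chi]

lemma chi_neg' (δ t : ℝ) : chi δ (-t) = - chi δ t := by simp [chi]

lemma chi_mul (δ : ℝ) (hδ : 0 < δ) {c : ℝ} (hc : 0 ≤ c) (t : ℝ) :
    chi δ (c * t) = c ^ ((1:ℝ) + δ) * chi δ t := by
  rcases hc.eq_or_lt with h | h
  · subst h; simp [chi, Real.zero_rpow (by positivity : (1:ℝ) + δ ≠ 0)]
  · have : c ^ ((1:ℝ)+δ) = c ^ (1:ℝ) * c ^ δ := Real.rpow_add h 1 δ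
    rw [this, Real.rpow_one]
    simp only [chi, abs_mul, abs_of_pos h,
      Real.mul_rpow h.le (abs_nonneg t)]
    ring

lemma chi_strictMono {δ : ℝ} (hδ0 : 0 < δ) : StrictMono (chi δ) := by
  have h0 : ∀ a b : ℝ, 0 ≤ a → a < b → chi δ a < chi δ b := by
    intro a b ha hab
    have hb : 0 < b := lt_of_le_of_lt ha hab
    have h1 : |a| ^ δ ≤ |b| ^ δ :=
      Real.rpow_le_rpow (abs_nonneg a)
        (by rw [abs_of_nonneg ha, abs_of_pos hb]; exact hab.le) hδ0.le
    have h2 : (0:ℝ) < |b| ^ δ := Real.rpow_pos_of_pos (abs_pos.2 hb.ne') δ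
    calc chi δ a = a * |a| ^ δ := rfl
      _ ≤ a * |b| ^ δ := mul_le_mul_of_nonneg_left h1 ha
      _ < b * |b| ^ δ := mul_lt_mul_of_pos_right hab h2
  intro a b hab
  rcases le_or_gt 0 a with ha | ha
  · exact h0 a b ha hab
  rcases le_or_gt b 0 with hb | hb
  · have := h0 (-b) (-a) (by linarith) (by linarith)
    rw [chi_neg', chi_neg'] at this; linarith
  · have h1 : chi δ a < 0 :=
      mul_neg_of_neg_of_pos ha (Real.rpow_pos_of_pos (abs_pos.2 ha.ne) δ)
    have h2 : 0 < chi δ b :=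
      mul_pos hb (Real.rpow_pos_of_pos (abs_pos.2 hb.ne') δ)
    linarith

lemma hasDerivAt_chi {δ : ℝ} (hδ0 : 0 < δ) (t : ℝ) :
    HasDerivAt (chi δ) ((1 + δ) * |t| ^ δ) t := by
  rcases eq_or_ne t 0 with rfl | ht
  · have hval : |(0:ℝ)| ^ δ = 0 := by simp [Real.zero_rpow hδ0.ne']
    rw [hval, mul_zero]
    rw [hasDerivAt_iff_tendsto_slope]
    have h1 : Tendsto (fun h : ℝ => |h| ^ δ) (nhds 0) (nhds 0) := by
      have habs : ContinuousAt (fun h : ℝ => |h|) (0:ℝ) := continuous_abs.continuousAt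
      have hr : ContinuousAt (fun x : ℝ => x ^ δ) ((fun h : ℝ => |h|) (0:ℝ)) := by
        simpa using Real.continuousAt_rpow_const 0 δ (Or.inr hδ0.le)
      have h2 := hr.comp habs
      have h3 : (fun h : ℝ => |h| ^ δ) (0:ℝ) = 0 := by
        simp [Real.zero_rpow hδ0.ne']
      have h4 := h2.tendsto
      simpa [Function.comp_def, Real.zero_rpow hδ0.ne'] using h4
    refine Tendsto.congr' ?_ (h1.mono_left nhdsWithin_le_nhds)
    filter_upwards [self_mem_nhdsWithin] with h hh
    simp only [mem_compl_iff, mem_singleton_iff] at hh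
    simp only [slope, chi, vsub_eq_sub, sub_zero, zero_mul, smul_eq_mul]
    rw [inv_mul_cancel_left₀ hh]
  · have habs : HasDerivAt (fun u : ℝ => |u|) ((SignType.sign t : ℝ)) t := hasDerivAt_abs ht
    have hrpow : HasDerivAt (fun u : ℝ => u ^ δ) (δ * |t| ^ (δ - 1)) |t| :=
      Real.hasDerivAt_rpow_const (Or.inl (abs_ne_zero.2 ht))
    have hcomp : HasDerivAt (fun u : ℝ => |u| ^ δ) (δ * |t| ^ (δ - 1) * (SignType.sign t : ℝ)) t :=
      hrpow.comp t habs
    have : HasDerivAt (chi δ) _ t := (hasDerivAt_id t).mul hcomp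
    convert this using 1
    have hsign : t * (SignType.sign t : ℝ) = |t| := by
      rcases ht.lt_or_gt with h | h
      · simp [h, abs_of_neg h]
      · simp [h, abs_of_pos h]
    have habs1 : |t| * |t| ^ (δ - 1) = |t| ^ δ := by
      rw [← Real.rpow_one_add' (abs_nonneg t) (show (1:ℝ) + (δ - 1) ≠ 0 by simpa using hδ0.ne')]
      norm_num
    calc (1 + δ) * |t| ^ δ = |t| ^ δ + δ * (|t| * |t| ^ (δ-1)) := by rw [habs1]; ring
      _ = 1 * |t| ^ δ + t * (δ * |t| ^ (δ - 1) * (SignType.sign t : ℝ)) := by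
          rw [← hsign]; ring

lemma abs_rpow_two_add {δ : ℝ} (hδ0 : 0 < δ) (t : ℝ) :
    |t| ^ ((2:ℝ) + δ) = t * chi δ t := by
  rcases eq_or_ne t 0 with rfl | ht
  · simp [chi, Real.zero_rpow (by positivity : (2:ℝ)+δ ≠ 0)]
  · have h1 : |t| ^ ((2:ℝ) + δ) = |t| ^ (2:ℝ) * |t| ^ δ := Real.rpow_add (abs_pos.2 ht) 2 δ
    rw [h1, chi]
    rw [show ((2:ℝ) : ℝ) = ((2:ℕ) : ℝ) by norm_num, Real.rpow_natCast, sq_abs]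
    ring

lemma hasDerivAt_V {δ : ℝ} (hδ0 : 0 < δ) (t : ℝ) :
    HasDerivAt (fun u : ℝ => |u| ^ ((2:ℝ) + δ)) ((2 + δ) * chi δ t) t := by
  have h : HasDerivAt (fun u : ℝ => u * chi δ u) _ t := (hasDerivAt_id' (x := t)).mul (hasDerivAt_chi hδ0 t)
  have heq : (fun u : ℝ => u * chi δ u) = fun u : ℝ => |u| ^ ((2:ℝ)+δ) := by
    funext u; rw [abs_rpow_two_add hδ0]
  rw [heq] at h
  convert h using 1
  simp only [chi]
  ring

lemma real_rpow_add_le {δ : ℝ} (hδ0 : 0 < δ) (hδ1 : δ ≤ 1) {u v : ℝ} (hu : 0 ≤ u) (hv : 0 ≤ v) :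
    (u + v) ^ δ ≤ u ^ δ + v ^ δ := by
  have h := NNReal.rpow_add_le_add_rpow u.toNNReal v.toNNReal hδ0.le hδ1
  have h2 := (NNReal.coe_le_coe).2 h
  push_cast [NNReal.coe_rpow] at h2
  rwa [Real.coe_toNNReal _ hu, Real.coe_toNNReal _ hv] at h2

lemma abs_rpow_sub_le {δ : ℝ} (hδ0 : 0 < δ) (hδ1 : δ ≤ 1) (x y : ℝ) :
    |x| ^ δ - |y| ^ δ ≤ |x - y| ^ δ := by
  have h1 : |x| ≤ |x - y| + |y| := by
    calc |x| = |x - y + y| := by ring_nf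
      _ ≤ |x - y| + |y| := abs_add_le _ _
  have h2 : |x| ^ δ ≤ (|x - y| + |y|) ^ δ :=
    Real.rpow_le_rpow (abs_nonneg x) h1 hδ0.le
  have h3 : (|x - y| + |y|) ^ δ ≤ |x - y| ^ δ + |y| ^ δ :=
    real_rpow_add_le hδ0 hδ1 (abs_nonneg _) (abs_nonneg _)
  linarith

lemma abs_abs_rpow_sub_le {δ : ℝ} (hδ0 : 0 < δ) (hδ1 : δ ≤ 1) (x y : ℝ) :
    abs (|x| ^ δ - |y| ^ δ) ≤ |x - y| ^ δ := by
  rw [abs_sub_le_iff]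
  constructor
  · exact abs_rpow_sub_le hδ0 hδ1 x y
  · have := abs_rpow_sub_le hδ0 hδ1 y x
    rwa [abs_sub_comm] at this

lemma chi_diff_bound {δ : ℝ} (hδ0 : 0 < δ) (hδ1 : δ ≤ 1) (p u v : ℝ) :
    |chi δ u - chi δ v - (1 + δ) * |p| ^ δ * (u - v)| ≤
      (1 + δ) * (|u - p| + |v - p|) ^ δ * |u - v| := by
  set g : ℝ → ℝ := fun t => chi δ t - (1 + δ) * |p| ^ δ * t with hg
  set C : ℝ := (1 + δ) * (|u - p| + |v - p|) ^ δ with hC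
  have hderiv : ∀ t : ℝ, HasDerivAt g ((1 + δ) * (|t| ^ δ - |p| ^ δ)) t := by
    intro t
    have h : HasDerivAt (fun t => chi δ t - (1 + δ) * |p| ^ δ * t) _ t := (hasDerivAt_chi hδ0 t).sub
      ((hasDerivAt_id' (x := t)).const_mul ((1 + δ) * |p| ^ δ))
    convert h using 1
    ring
  have hbound : ∀ t ∈ uIcc u v, ‖(1 + δ) * (|t| ^ δ - |p| ^ δ)‖ ≤ C := by
    intro t ht
    have hmem : min u v ≤ t ∧ t ≤ max u v := ⟨ht.1, ht.2⟩
    have h1 : |t - p| ≤ |u - p| + |v - p| := by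
      have h3 := hmem.1
      have h4 := hmem.2
      have e1 := le_abs_self (u - p)
      have e2 := neg_le_abs (u - p)
      have e3 := le_abs_self (v - p)
      have e4 := neg_le_abs (v - p)
      have e5 := abs_nonneg (u - p)
      have e6 := abs_nonneg (v - p)
      rcases le_total u v with h | h
      · rw [inf_eq_left.mpr h] at h3
        rw [sup_eq_right.mpr h] at h4
        rw [abs_sub_le_iff]
        constructor <;> linarith
      · rw [inf_eq_right.mpr h] at h3
        rw [sup_eq_left.mpr h] at h4
        rw [abs_sub_le_iff]
        constructor <;> linarith
    have h2 : abs (|t| ^ δ - |p| ^ δ) ≤ (|u - p| + |v - p|) ^ δ := by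
      calc abs (|t| ^ δ - |p| ^ δ) ≤ |t - p| ^ δ := abs_abs_rpow_sub_le hδ0 hδ1 t p
        _ ≤ (|u - p| + |v - p|) ^ δ :=
          Real.rpow_le_rpow (abs_nonneg _) h1 hδ0.le
    calc ‖(1 + δ) * (|t| ^ δ - |p| ^ δ)‖ = (1 + δ) * abs (|t| ^ δ - |p| ^ δ) := by
          rw [Real.norm_eq_abs, abs_mul, abs_of_pos (by linarith : (0:ℝ) < 1 + δ)]
      _ ≤ C := by rw [hC]; exact mul_le_mul_of_nonneg_left h2 (by linarith)
  have hkey := Convex.norm_image_sub_le_of_norm_hasDerivWithin_le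
    (f := g) (f' := fun t => (1 + δ) * (|t| ^ δ - |p| ^ δ)) (s := uIcc u v)
    (fun t ht => (hderiv t).hasDerivWithinAt) hbound (convex_uIcc u v)
    (right_mem_uIcc) (left_mem_uIcc)
  have heq : g u - g v = chi δ u - chi δ v - (1 + δ) * |p| ^ δ * (u - v) := by
    rw [hg]; ring
  calc |chi δ u - chi δ v - (1 + δ) * |p| ^ δ * (u - v)| = ‖g u - g v‖ := by
        rw [heq, Real.norm_eq_abs]
    _ ≤ C * ‖u - v‖ := hkey
    _ = (1 + δ) * (|u - p| + |v - p|) ^ δ * |u - v| := by rw [hC, Real.norm_eq_abs]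

noncomputable def Hfun {d : ℕ} (δ : ℝ) (a b : Fin d → ℝ) (z : ℝ) : ℝ :=
  ∑ i : Fin d, (chi δ (z - a i) + chi δ (z - b i))

noncomputable def Ffun {d : ℕ} (δ : ℝ) (a b : Fin d → ℝ) (z : ℝ) : ℝ :=
  ∑ i : Fin d, (|a i - z| ^ ((2:ℝ) + δ) + |b i - z| ^ ((2:ℝ) + δ))

lemma hasDerivAt_Ffun {d : ℕ} {δ : ℝ} (hδ0 : 0 < δ) (a b : Fin d → ℝ) (z : ℝ) :
    HasDerivAt (Ffun δ a b) ((2 + δ) * Hfun δ a b z) z := by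
  have hterm : ∀ (c : ℝ), HasDerivAt (fun z : ℝ => |c - z| ^ ((2:ℝ) + δ))
      ((2 + δ) * chi δ (z - c)) z := by
    intro c
    have hinner : HasDerivAt (fun z : ℝ => c - z) (-1) z := by
      simpa using (show HasDerivAt (fun z : ℝ => c - z) (0 - 1) z from (hasDerivAt_const z c).sub (hasDerivAt_id' (x := z)))
    have h : HasDerivAt (fun z : ℝ => |c - z| ^ ((2:ℝ) + δ)) _ z := (hasDerivAt_V hδ0 (c - z)).comp z hinner
    convert h using 1
    have : z - c = -(c - z) := by ring
    rw [this, chi_neg']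
    ring
  have h : HasDerivAt (fun z : ℝ => ∑ i : Fin d, (|a i - z| ^ ((2:ℝ) + δ) + |b i - z| ^ ((2:ℝ) + δ))) _ z := HasDerivAt.fun_sum
    (A := fun (i : Fin d) (z : ℝ) => |a i - z| ^ ((2:ℝ) + δ) + |b i - z| ^ ((2:ℝ) + δ))
    (A' := fun i => (2 + δ) * chi δ (z - a i) + (2 + δ) * chi δ (z - b i))
    (u := Finset.univ) (x := z)
    (fun i _ => (hterm (a i)).add (hterm (b i)))
  have heq : Ffun δ a b = fun z : ℝ =>
      ∑ i : Fin d, (|a i - z| ^ ((2:ℝ) + δ) + |b i - z| ^ ((2:ℝ) + δ)) := rfl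
  rw [heq]
  convert h using 1
  rw [Hfun, Finset.mul_sum]
  congr 1
  funext i
  ring

lemma Hfun_strictMono {d : ℕ} {δ : ℝ} (hd : 0 < d) (hδ0 : 0 < δ) (a b : Fin d → ℝ) :
    StrictMono (Hfun δ a b) := by
  intro z w hzw
  haveI : Nonempty (Fin d) := ⟨⟨0, hd⟩⟩
  apply Finset.sum_lt_sum_of_nonempty Finset.univ_nonempty
  intro i _
  exact add_lt_add (chi_strictMono hδ0 (by linarith))
    (chi_strictMono hδ0 (by linarith))

lemma Ffun_continuous {d : ℕ} {δ : ℝ} (hδ0 : 0 < δ) (a b : Fin d → ℝ) :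
    Continuous (Ffun δ a b) := by
  have hc : Continuous (fun x : ℝ => x ^ ((2:ℝ) + δ)) :=
    continuous_iff_continuousAt.2 fun x =>
      Real.continuousAt_rpow_const x _ (Or.inr (by positivity))
  apply continuous_finset_sum
  intro i _
  exact ((hc.comp (continuous_const.sub continuous_id).abs)).add
    (hc.comp (continuous_const.sub continuous_id).abs)

lemma exists_Ffun_min {d : ℕ} {δ : ℝ} (hd : 0 < d) (hδ0 : 0 < δ) (a b : Fin d → ℝ) :
    ∃ z₀ : ℝ, ∀ w, Ffun δ a b z₀ ≤ Ffun δ a b w := by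
  set i₀ : Fin d := ⟨0, hd⟩
  have h1 : Tendsto (fun z : ℝ => |z|) (cocompact ℝ) atTop := by
    exact tendsto_norm_cocompact_atTop (E := ℝ)
  have h2 : Tendsto (fun z : ℝ => |a i₀ - z|) (cocompact ℝ) atTop := by
    apply tendsto_atTop_mono (f := fun z : ℝ => |z| - |a i₀|)
    · intro z
      have := abs_sub_abs_le_abs_sub z (a i₀)
      rw [abs_sub_comm] at this
      linarith
    · exact tendsto_atTop_add_const_right _ (-|a i₀|) h1
  have h3 : Tendsto (fun z : ℝ => |a i₀ - z| ^ ((2:ℝ) + δ)) (cocompact ℝ) atTop :=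
    (tendsto_rpow_atTop (by positivity)).comp h2
  have h4 : Tendsto (Ffun δ a b) (cocompact ℝ) atTop := by
    apply tendsto_atTop_mono _ h3
    intro z
    have hterm : ∀ i : Fin d,
        (0:ℝ) ≤ |a i - z| ^ ((2:ℝ) + δ) + |b i - z| ^ ((2:ℝ) + δ) := fun i =>
      add_nonneg (Real.rpow_nonneg (abs_nonneg _) _) (Real.rpow_nonneg (abs_nonneg _) _)
    calc |a i₀ - z| ^ ((2:ℝ) + δ)
        ≤ |a i₀ - z| ^ ((2:ℝ) + δ) + |b i₀ - z| ^ ((2:ℝ) + δ) := by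
          have := Real.rpow_nonneg (abs_nonneg (b i₀ - z)) ((2:ℝ) + δ)
          linarith
      _ ≤ Ffun δ a b z := Finset.single_le_sum (fun i _ => hterm i) (Finset.mem_univ i₀)
  exact (Ffun_continuous hδ0 a b).exists_forall_le h4

lemma Ffun_min_spec {d : ℕ} {δ : ℝ} (hd : 0 < d) (hδ0 : 0 < δ) (a b : Fin d → ℝ) :
    ∃ z₀ : ℝ, {z : ℝ | ∀ w, Ffun δ a b z ≤ Ffun δ a b w} = {z₀} ∧ Hfun δ a b z₀ = 0 := by
  obtain ⟨z₀, hz₀⟩ := exists_Ffun_min hd hδ0 a b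
  have hH : ∀ z : ℝ, (∀ w, Ffun δ a b z ≤ Ffun δ a b w) → Hfun δ a b z = 0 := by
    intro z hz
    have hloc : IsLocalMin (Ffun δ a b) z := Filter.Eventually.of_forall fun w => hz w
    have h0 := hloc.hasDerivAt_eq_zero (hasDerivAt_Ffun hδ0 a b z)
    have h2 : (2 + δ) ≠ 0 := by positivity
    exact (mul_eq_zero.mp h0).resolve_left h2
  refine ⟨z₀, ?_, hH z₀ hz₀⟩
  ext z
  simp only [mem_setOf_eq, mem_singleton_iff]
  constructor
  · intro hz
    exact (Hfun_strictMono hd hδ0 a b).injective (by rw [hH z hz, hH z₀ hz₀])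
  · rintro rfl
    exact hz₀

lemma Hfun_neg_of_lt {d : ℕ} {δ : ℝ} (hd : 0 < d) (hδ0 : 0 < δ) (a b : Fin d → ℝ) {z : ℝ}
    (h : ∀ i : Fin d, z < (a i + b i) / 2) : Hfun δ a b z < 0 := by
  haveI : Nonempty (Fin d) := ⟨⟨0, hd⟩⟩
  have hterm : ∀ i : Fin d, chi δ (z - a i) + chi δ (z - b i) < 0 := by
    intro i
    have h1 : z - a i < -(z - b i) := by have := h i; linarith
    have h2 := chi_strictMono hδ0 h1
    rw [chi_neg'] at h2
    linarith
  have := Finset.sum_lt_sum_of_nonempty (Finset.univ_nonempty (α := Fin d))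
    (f := fun i : Fin d => chi δ (z - a i) + chi δ (z - b i)) (g := fun _ => (0:ℝ))
    (fun i _ => hterm i)
  simpa [Hfun] using this

lemma Hfun_pos_of_gt {d : ℕ} {δ : ℝ} (hd : 0 < d) (hδ0 : 0 < δ) (a b : Fin d → ℝ) {z : ℝ}
    (h : ∀ i : Fin d, (a i + b i) / 2 < z) : 0 < Hfun δ a b z := by
  haveI : Nonempty (Fin d) := ⟨⟨0, hd⟩⟩
  have hterm : ∀ i : Fin d, 0 < chi δ (z - a i) + chi δ (z - b i) := by
    intro i
    have h1 : -(z - b i) < z - a i := by have := h i; linarith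
    have h2 := chi_strictMono hδ0 h1
    rw [chi_neg'] at h2
    linarith
  have := Finset.sum_lt_sum_of_nonempty (Finset.univ_nonempty (α := Fin d))
    (g := fun i : Fin d => chi δ (z - a i) + chi δ (z - b i)) (f := fun _ => (0:ℝ))
    (fun i _ => hterm i)
  simpa [Hfun] using this

lemma PhiEps_key {d : ℕ} {δ : ℝ} (hd : 0 < d) (hδ0 : 0 < δ) (V : ℝ → ℝ)
    (hV : ∀ x : ℝ, V x = |x| ^ ((2:ℝ) + δ)) (φ : (Fin d → ℝ) → ℝ)
    (y : Fin d → ℝ) (ε : ℝ) :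
    Hfun δ (fun i => φ (y + Real.sqrt ε • stdBasis d i) - φ y)
      (fun i => φ (y - Real.sqrt ε • stdBasis d i) - φ y) (PhiEps V φ y ε) = 0 := by
  obtain ⟨z₀, hset, hz₀⟩ := Ffun_min_spec hd hδ0
    (fun i => φ (y + Real.sqrt ε • stdBasis d i) - φ y)
    (fun i => φ (y - Real.sqrt ε • stdBasis d i) - φ y)
  have hPhi : PhiEps V φ y ε = z₀ := by
    rw [PhiEps]
    have hsets : {z : ℝ | ∀ w : ℝ, ∑ i : Fin d,
        (V (φ (y + Real.sqrt ε • stdBasis d i) - φ y - z) +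
         V (φ (y - Real.sqrt ε • stdBasis d i) - φ y - z)) ≤ ∑ i : Fin d,
        (V (φ (y + Real.sqrt ε • stdBasis d i) - φ y - w) +
         V (φ (y - Real.sqrt ε • stdBasis d i) - φ y - w))} = {z₀} := by
      rw [← hset]
      ext z
      simp only [mem_setOf_eq, Ffun, hV]
    rw [hsets]
    simp only [csInf_singleton, csSup_singleton]
    ring
  rw [hPhi]
  exact hz₀

lemma taylor_key {d : ℕ} {φ : (Fin d → ℝ) → ℝ} (hφ : ContDiff ℝ 2 φ) (x v : Fin d → ℝ) :
    Tendsto (fun q : (Fin d → ℝ) × ℝ =>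
        (φ (q.1 + Real.sqrt q.2 • v) - φ q.1 - Real.sqrt q.2 * fderiv ℝ φ q.1 v) / q.2)
      ((nhds x) ×ˢ (nhdsWithin 0 (Set.Ioi 0)))
      (nhds (fderiv ℝ (fun z => fderiv ℝ φ z v) x v / 2)) := by
  set ψ : (Fin d → ℝ) → ℝ := fun z => fderiv ℝ φ z v with hψdef
  have hφ1 : ContDiff ℝ 1 φ := hφ.of_le (by norm_num)
  have hfd : ContDiff ℝ 1 (fderiv ℝ φ) := hφ.fderiv_right (by norm_num)
  have hψ : ContDiff ℝ 1 ψ := hfd.clm_apply contDiff_const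
  have hψd : Differentiable ℝ ψ := hψ.differentiable one_ne_zero
  have hφd : Differentiable ℝ φ := hφ1.differentiable one_ne_zero
  have hcont2 : Continuous (fun z : (Fin d → ℝ) => fderiv ℝ ψ z v) :=
    (hψ.continuous_fderiv one_ne_zero).clm_apply continuous_const
  set Q : ℝ := fderiv ℝ ψ x v with hQdef
  rw [Metric.tendsto_nhds]
  intro η hη
  obtain ⟨γ, hγ0, hγ⟩ := Metric.continuousAt_iff.mp hcont2.continuousAt (η / 2) (by positivity)
  set r : ℝ := min 1 ((γ / (2 * (‖v‖ + 1))) ^ 2) with hrdef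
  have hr0 : 0 < r := by
    apply lt_min one_pos
    positivity
  have hmem : (Metric.ball x (γ / 2)) ×ˢ (Ioo (0:ℝ) r) ∈
      (nhds x) ×ˢ (nhdsWithin (0:ℝ) (Set.Ioi 0)) :=
    prod_mem_prod (Metric.ball_mem_nhds x (by positivity))
      (Ioo_mem_nhdsGT hr0)
  filter_upwards [hmem] with q hq
  obtain ⟨hy, hε⟩ := hq
  set y : (Fin d → ℝ) := q.1
  set ε : ℝ := q.2
  have hε0 : 0 < ε := hε.1
  set h : ℝ := Real.sqrt ε with hhdef
  have hh0 : 0 < h := Real.sqrt_pos.2 hε0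
  have hh2 : h ^ 2 = ε := Real.sq_sqrt hε0.le
  have hhle : h ≤ γ / (2 * (‖v‖ + 1)) := by
    have h1 : ε ≤ (γ / (2 * (‖v‖ + 1))) ^ 2 := le_trans hε.2.le (min_le_right _ _)
    calc h = Real.sqrt ε := rfl
      _ ≤ Real.sqrt ((γ / (2 * (‖v‖ + 1))) ^ 2) := Real.sqrt_le_sqrt h1
      _ = γ / (2 * (‖v‖ + 1)) := Real.sqrt_sq (by positivity)
  have hpoint : ∀ t ∈ Icc (0:ℝ) h, dist (y + t • v) x < γ := by
    intro t ht
    have h1 : dist (y + t • v) x ≤ dist y x + t * ‖v‖ := by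
      calc dist (y + t • v) x ≤ dist (y + t • v) y + dist y x := dist_triangle _ _ _
        _ = ‖t • v‖ + dist y x := by rw [dist_eq_norm]; ring_nf
        _ = |t| * ‖v‖ + dist y x := by rw [norm_smul, Real.norm_eq_abs]
        _ = t * ‖v‖ + dist y x := by rw [abs_of_nonneg ht.1]
        _ = dist y x + t * ‖v‖ := by ring
    have h2 : t * ‖v‖ ≤ γ / 2 := by
      have h3 : t * ‖v‖ ≤ (γ / (2 * (‖v‖ + 1))) * ‖v‖ := by
        apply mul_le_mul_of_nonneg_right (le_trans ht.2 hhle) (norm_nonneg v)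
      have h4 : (γ / (2 * (‖v‖ + 1))) * ‖v‖ ≤ γ / 2 := by
        rw [div_mul_eq_mul_div, div_le_div_iff₀ (by positivity) (by norm_num)]
        nlinarith [norm_nonneg v, hγ0]
      linarith
    have h5 : dist y x < γ / 2 := hy
    linarith
  -- the curve and its derivatives
  set g : ℝ → ℝ := fun t => φ (y + t • v) with hgdef
  set G1 : ℝ → ℝ := fun t => ψ (y + t • v) with hG1def
  set G2 : ℝ → ℝ := fun t => fderiv ℝ ψ (y + t • v) v with hG2def
  have hcurve : ∀ t : ℝ, HasDerivAt (fun s : ℝ => y + s • v) v t := by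
    intro t
    have := ((hasDerivAt_id' (x := t)).smul_const v).const_add y
    simpa using this
  have hg' : ∀ t : ℝ, HasDerivAt g (G1 t) t := by
    intro t
    exact (hφd (y + t • v)).hasFDerivAt.comp_hasDerivAt t (hcurve t)
  have hG1' : ∀ t : ℝ, HasDerivAt G1 (G2 t) t := by
    intro t
    exact (hψd (y + t • v)).hasFDerivAt.comp_hasDerivAt t (hcurve t)
  have hG2bound : ∀ t ∈ Icc (0:ℝ) h, ‖G2 t - Q‖ ≤ η / 2 := by
    intro t ht
    have := hγ (hpoint t ht)
    rw [Real.dist_eq] at this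
    rw [Real.norm_eq_abs]
    exact le_of_lt this
  -- first application of MVT bound
  have hder1 : ∀ s ∈ Icc (0:ℝ) h,
      HasDerivWithinAt (fun s => G1 s - s * Q) (G2 s - Q) (Icc (0:ℝ) h) s := by
    intro s hs
    have h1 : HasDerivAt (fun s => G1 s - s * Q) _ s := (hG1' s).sub ((hasDerivAt_id' (x := s)).mul_const Q)
    have h2 : HasDerivAt (fun s => G1 s - s * Q) (G2 s - Q) s := by
      convert h1 using 1
      ring
    exact h2.hasDerivWithinAt
  have step1 : ∀ t ∈ Icc (0:ℝ) h, ‖(G1 t - t * Q) - (G1 0 - 0 * Q)‖ ≤ η / 2 * ‖t - 0‖ := by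
    intro t ht
    exact Convex.norm_image_sub_le_of_norm_hasDerivWithin_le hder1
      (fun s hs => hG2bound s hs) (convex_Icc 0 h) ⟨le_refl 0, hh0.le⟩ ht
  have step1' : ∀ t ∈ Icc (0:ℝ) h, ‖G1 t - G1 0 - t * Q‖ ≤ η / 2 * h := by
    intro t ht
    have := step1 t ht
    have h2 : ‖t - 0‖ ≤ h := by
      rw [sub_zero, Real.norm_eq_abs, abs_of_nonneg ht.1]; exact ht.2
    calc ‖G1 t - G1 0 - t * Q‖ = ‖(G1 t - t * Q) - (G1 0 - 0 * Q)‖ := by ring_nf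
      _ ≤ η / 2 * ‖t - 0‖ := this
      _ ≤ η / 2 * h := by
          apply mul_le_mul_of_nonneg_left h2 (by positivity)
  -- second application
  have hder2 : ∀ s ∈ Icc (0:ℝ) h,
      HasDerivWithinAt (fun s => g s - s * G1 0 - s ^ 2 * (Q / 2))
        (G1 s - G1 0 - s * Q) (Icc (0:ℝ) h) s := by
    intro s hs
    have h1 : HasDerivAt (fun s => g s - s * G1 0 - s ^ 2 * (Q / 2)) _ s := ((hg' s).sub ((hasDerivAt_id' (x := s)).mul_const (G1 0))).sub
      ((hasDerivAt_pow 2 s).mul_const (Q / 2))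
    have h2 : HasDerivAt (fun s => g s - s * G1 0 - s ^ 2 * (Q / 2))
        (G1 s - G1 0 - s * Q) s := by
      convert h1 using 1
      norm_num
      ring
    exact h2.hasDerivWithinAt
  have step2 : ‖(g h - h * G1 0 - h ^ 2 * (Q / 2)) - (g 0 - 0 * G1 0 - 0 ^ 2 * (Q / 2))‖ ≤
      (η / 2 * h) * ‖h - 0‖ :=
    Convex.norm_image_sub_le_of_norm_hasDerivWithin_le hder2
      (fun s hs => step1' s hs) (convex_Icc 0 h) ⟨le_refl 0, hh0.le⟩ ⟨hh0.le, le_refl h⟩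
  have hnum : |φ (y + h • v) - φ y - h * fderiv ℝ φ y v - ε * (Q / 2)| ≤ η / 2 * ε := by
    have h1 : g h - h * G1 0 - h ^ 2 * (Q / 2) - (g 0 - 0 * G1 0 - 0 ^ 2 * (Q / 2))
        = φ (y + h • v) - φ y - h * fderiv ℝ φ y v - ε * (Q / 2) := by
      simp only [hgdef, hG1def, hψdef, zero_smul, add_zero, hh2]
      ring
    have h2 : ‖h - 0‖ = h := by rw [sub_zero, Real.norm_eq_abs, abs_of_pos hh0]
    have h3 := step2
    rw [h1, h2, Real.norm_eq_abs] at h3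
    calc |φ (y + h • v) - φ y - h * fderiv ℝ φ y v - ε * (Q / 2)| ≤ η / 2 * h * h := h3
      _ = η / 2 * ε := by rw [mul_assoc, ← sq, hh2]
  have hfinal : dist ((φ (y + h • v) - φ y - h * fderiv ℝ φ y v) / ε) (Q / 2) < η := by
    rw [Real.dist_eq]
    have h1 : (φ (y + h • v) - φ y - h * fderiv ℝ φ y v) / ε - Q / 2
        = (φ (y + h • v) - φ y - h * fderiv ℝ φ y v - ε * (Q / 2)) / ε := by
      field_simp
    rw [h1, abs_div, abs_of_pos hε0]
    rw [div_lt_iff₀ hε0]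
    calc |φ (y + h • v) - φ y - h * fderiv ℝ φ y v - ε * (Q / 2)| ≤ η / 2 * ε := hnum
      _ < η * ε := by nlinarith
  exact hfinal

/-- **Consistency for the potential `V(x) = |x|^{2+δ}` (Lemma 5.2).**
Let `δ ∈ (0,1)` and `V(x) = |x|^{2+δ}`.  Then for every `x`,
`(1/2) min_i φ_{x_ix_i}(x) ≤ liminf Φ^ε(y)/ε ≤ limsup Φ^ε(y)/ε ≤ (1/2) max_i φ_{x_ix_i}(x)`
as `y → x`, `ε → 0⁺`, and if `Dφ(x) ≠ 0` then
`lim Φ^ε(y)/ε = Σ_i |φ_{x_i}(x)|^{δ} φ_{x_ix_i}(x) / (2 Σ_i |φ_{x_i}(x)|^{δ})`. -/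
theorem stmt10 (d : ℕ) (hd : 0 < d) (δ : ℝ) (hδ0 : 0 < δ) (hδ1 : δ < 1)
    (V : ℝ → ℝ) (hV : ∀ x : ℝ, V x = |x| ^ ((2 : ℝ) + δ))
    (φ : (Fin d → ℝ) → ℝ) (hφ : ContDiff ℝ 2 φ) (x : Fin d → ℝ) :
    ((⨅ i : Fin d, pd2 φ x i i) / 2 ≤
        liminf (fun q : (Fin d → ℝ) × ℝ => PhiEps V φ q.1 q.2 / q.2)
          ((nhds x) ×ˢ (nhdsWithin 0 (Set.Ioi 0))) ∧
      liminf (fun q : (Fin d → ℝ) × ℝ => PhiEps V φ q.1 q.2 / q.2)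
          ((nhds x) ×ˢ (nhdsWithin 0 (Set.Ioi 0))) ≤
        limsup (fun q : (Fin d → ℝ) × ℝ => PhiEps V φ q.1 q.2 / q.2)
          ((nhds x) ×ˢ (nhdsWithin 0 (Set.Ioi 0))) ∧
      limsup (fun q : (Fin d → ℝ) × ℝ => PhiEps V φ q.1 q.2 / q.2)
          ((nhds x) ×ˢ (nhdsWithin 0 (Set.Ioi 0))) ≤
        (⨆ i : Fin d, pd2 φ x i i) / 2) ∧
    (grad φ x ≠ 0 →
      Tendsto (fun q : (Fin d → ℝ) × ℝ => PhiEps V φ q.1 q.2 / q.2)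
        ((nhds x) ×ˢ (nhdsWithin 0 (Set.Ioi 0)))
        (nhds ((∑ i : Fin d, |pd φ x i| ^ δ * pd2 φ x i i) /
          (2 * ∑ i : Fin d, |pd φ x i| ^ δ)))) := by
  haveI : Nonempty (Fin d) := ⟨⟨0, hd⟩⟩
  set F : Filter ((Fin d → ℝ) × ℝ) := (nhds x) ×ˢ (nhdsWithin 0 (Set.Ioi 0)) with hF
  haveI hFne : F.NeBot := by rw [hF]; infer_instance
  set u : ((Fin d → ℝ) × ℝ) → ℝ := fun q => PhiEps V φ q.1 q.2 / q.2 with hu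
  -- the A and B functionals
  set A : Fin d → ((Fin d → ℝ) × ℝ) → ℝ := fun i q =>
    (φ (q.1 + Real.sqrt q.2 • stdBasis d i) - φ q.1 -
      Real.sqrt q.2 * fderiv ℝ φ q.1 (stdBasis d i)) / q.2 with hA
  set B : Fin d → ((Fin d → ℝ) × ℝ) → ℝ := fun i q =>
    (φ (q.1 - Real.sqrt q.2 • stdBasis d i) - φ q.1 +
      Real.sqrt q.2 * fderiv ℝ φ q.1 (stdBasis d i)) / q.2 with hB
  have hAt : ∀ i, Tendsto (A i) F (nhds (pd2 φ x i i / 2)) := by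
    intro i
    exact taylor_key hφ x (stdBasis d i)
  have hBt : ∀ i, Tendsto (B i) F (nhds (pd2 φ x i i / 2)) := by
    intro i
    have h1 := taylor_key hφ x (-(stdBasis d i))
    have h2 : fderiv ℝ (fun z => fderiv ℝ φ z (-(stdBasis d i))) x (-(stdBasis d i))
        = pd2 φ x i i := by
      have h3 : (fun z : Fin d → ℝ => fderiv ℝ φ z (-(stdBasis d i)))
          = fun z => -((fun z : Fin d → ℝ => fderiv ℝ φ z (stdBasis d i)) z) := by
        funext z
        simp only [map_neg]
      rw [h3, fderiv_fun_neg]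
      simp [pd2]
    have h5 : (fun q : (Fin d → ℝ) × ℝ =>
        (φ (q.1 + Real.sqrt q.2 • (-(stdBasis d i))) - φ q.1 -
          Real.sqrt q.2 * fderiv ℝ φ q.1 (-(stdBasis d i))) / q.2) = B i := by
      funext q
      rw [hB]
      simp only [smul_neg, map_neg]
      rw [← sub_eq_add_neg]
      ring_nf
    rw [h2, h5] at h1
    exact h1
  have hPt : ∀ i, Tendsto (fun q : (Fin d → ℝ) × ℝ => fderiv ℝ φ q.1 (stdBasis d i)) F
      (nhds (pd φ x i)) := by
    intro i
    have hc : Continuous (fun z : Fin d → ℝ => fderiv ℝ φ z (stdBasis d i)) :=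
      (hφ.continuous_fderiv (by norm_num)).clm_apply continuous_const
    exact (hc.tendsto x).comp tendsto_fst
  have hsqrt : Tendsto (fun q : (Fin d → ℝ) × ℝ => Real.sqrt q.2) F (nhds 0) := by
    have h1 : Tendsto (fun q : (Fin d → ℝ) × ℝ => q.2) F (nhds 0) :=
      tendsto_snd.mono_right nhdsWithin_le_nhds
    have := (Real.continuous_sqrt.tendsto 0).comp h1
    simpa [Function.comp_def] using this
  have hev0 : ∀ᶠ q : (Fin d → ℝ) × ℝ in F, 0 < q.2 := by
    rw [hF]
    have : (univ : Set (Fin d → ℝ)) ×ˢ (Ioi (0:ℝ)) ∈ (nhds x) ×ˢ (nhdsWithin (0:ℝ) (Set.Ioi 0)) :=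
      prod_mem_prod univ_mem self_mem_nhdsWithin
    filter_upwards [this] with q hq
    exact hq.2
  have hABi : ∀ i, Tendsto (fun q => A i q + B i q) F (nhds (pd2 φ x i i)) := by
    intro i
    have h1 := (hAt i).add (hBt i)
    rwa [add_halves] at h1
  -- the sandwich
  have hsand : ∀ η : ℝ, 0 < η → ∀ᶠ q in F,
      (⨅ i, pd2 φ x i i) / 2 - η ≤ u q ∧ u q ≤ (⨆ i, pd2 φ x i i) / 2 + η := by
    intro η hη
    have hev1 : ∀ᶠ q in F, ∀ i, |A i q + B i q - pd2 φ x i i| < η := by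
      rw [eventually_all]
      intro i
      have h1 := Metric.tendsto_nhds.mp (hABi i) η hη
      simpa [Real.dist_eq] using h1
    filter_upwards [hev0, hev1] with q h0 h1
    have hkey := PhiEps_key hd hδ0 V hV φ q.1 q.2
    set a : Fin d → ℝ := fun i => φ (q.1 + Real.sqrt q.2 • stdBasis d i) - φ q.1 with ha2
    set b : Fin d → ℝ := fun i => φ (q.1 - Real.sqrt q.2 • stdBasis d i) - φ q.1 with hb2
    have hab : ∀ i, (a i + b i) / 2 / q.2 = (A i q + B i q) / 2 := by
      intro i
      rw [hA, hB, ha2, hb2]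
      field_simp
      try ring
      try exact Or.inl trivial
    constructor
    · obtain ⟨i, hi⟩ : ∃ i, (a i + b i) / 2 ≤ PhiEps V φ q.1 q.2 := by
        by_contra hc
        push_neg at hc
        exact absurd hkey (ne_of_lt (Hfun_neg_of_lt hd hδ0 a b hc))
      have h2 : (a i + b i) / 2 / q.2 ≤ PhiEps V φ q.1 q.2 / q.2 := by gcongr
      rw [hab i] at h2
      have h3 : pd2 φ x i i - η ≤ A i q + B i q := by
        have := h1 i
        rw [abs_lt] at this
        linarith [this.1]
      have h4 : (⨅ j, pd2 φ x j j) ≤ pd2 φ x i i :=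
        ciInf_le (Set.Finite.bddBelow (Set.finite_range _)) i
      have h5 : u q = PhiEps V φ q.1 q.2 / q.2 := rfl
      rw [h5]
      linarith
    · obtain ⟨i, hi⟩ : ∃ i, PhiEps V φ q.1 q.2 ≤ (a i + b i) / 2 := by
        by_contra hc
        push_neg at hc
        exact absurd hkey (ne_of_gt (Hfun_pos_of_gt hd hδ0 a b hc))
      have h2 : PhiEps V φ q.1 q.2 / q.2 ≤ (a i + b i) / 2 / q.2 := by gcongr
      rw [hab i] at h2
      have h3 : A i q + B i q ≤ pd2 φ x i i + η := by
        have := h1 i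
        rw [abs_lt] at this
        linarith [this.2]
      have h4 : pd2 φ x i i ≤ (⨆ j, pd2 φ x j j) :=
        le_ciSup (f := fun j => pd2 φ x j j) (Set.Finite.bddAbove (Set.finite_range _)) i
      have h5 : u q = PhiEps V φ q.1 q.2 / q.2 := rfl
      rw [h5]
      linarith
  have hbdd1 : IsBoundedUnder (· ≤ ·) F u :=
    ⟨(⨆ i, pd2 φ x i i) / 2 + 1, eventually_map.2 ((hsand 1 one_pos).mono fun q hq => hq.2)⟩
  have hbdd2 : IsBoundedUnder (· ≥ ·) F u :=
    ⟨(⨅ i, pd2 φ x i i) / 2 - 1, eventually_map.2 ((hsand 1 one_pos).mono fun q hq => hq.1)⟩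
  have hlb : (⨅ i, pd2 φ x i i) / 2 ≤ liminf u F := by
    by_contra hcon
    push_neg at hcon
    have hη : 0 < ((⨅ i, pd2 φ x i i) / 2 - liminf u F) / 2 := by linarith
    have h1 : (⨅ i, pd2 φ x i i) / 2 - ((⨅ i, pd2 φ x i i) / 2 - liminf u F) / 2 ≤ liminf u F :=
      le_liminf_of_le hbdd1.isCoboundedUnder_ge ((hsand _ hη).mono fun q hq => hq.1)
    linarith
  have hub : limsup u F ≤ (⨆ i, pd2 φ x i i) / 2 := by
    by_contra hcon
    push_neg at hcon
    have hη : 0 < (limsup u F - (⨆ i, pd2 φ x i i) / 2) / 2 := by linarith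
    have h1 : limsup u F ≤ (⨆ i, pd2 φ x i i) / 2 + (limsup u F - (⨆ i, pd2 φ x i i) / 2) / 2 :=
      limsup_le_of_le hbdd2.isCoboundedUnder_le ((hsand _ hη).mono fun q hq => hq.2)
    linarith
  refine ⟨⟨hlb, liminf_le_limsup hbdd1 hbdd2, hub⟩, ?_⟩
  -- Part B
  intro hgrad
  have hpd : ∃ i, pd φ x i ≠ 0 := by
    by_contra hc
    push_neg at hc
    apply hgrad
    funext i
    exact hc i
  have hS0 : 0 < ∑ i, |pd φ x i| ^ δ := by
    obtain ⟨i, hi⟩ := hpd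
    exact Finset.sum_pos' (fun j _ => Real.rpow_nonneg (abs_nonneg _) δ)
      ⟨i, Finset.mem_univ i, Real.rpow_pos_of_pos (abs_pos.2 hi) δ⟩
  set L : ℝ := (∑ i : Fin d, |pd φ x i| ^ δ * pd2 φ x i i) /
    (2 * ∑ i : Fin d, |pd φ x i| ^ δ) with hL
  set M : ℝ → ((Fin d → ℝ) × ℝ) → ℝ := fun s q => ∑ i : Fin d,
    (chi δ (fderiv ℝ φ q.1 (stdBasis d i) + Real.sqrt q.2 * (s - B i q)) -
     chi δ (fderiv ℝ φ q.1 (stdBasis d i) + Real.sqrt q.2 * (A i q - s))) / Real.sqrt q.2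
    with hM
  have hMt : ∀ s : ℝ, Tendsto (M s) F
      (nhds ((1+δ) * ∑ i : Fin d, |pd φ x i| ^ δ * (2*s - pd2 φ x i i))) := by
    intro s
    have hterm : ∀ i : Fin d, Tendsto (fun q : (Fin d → ℝ) × ℝ =>
        (chi δ (fderiv ℝ φ q.1 (stdBasis d i) + Real.sqrt q.2 * (s - B i q)) -
         chi δ (fderiv ℝ φ q.1 (stdBasis d i) + Real.sqrt q.2 * (A i q - s))) / Real.sqrt q.2)
        F (nhds ((1+δ) * (|pd φ x i| ^ δ * (2*s - pd2 φ x i i)))) := by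
      intro i
      set Ui : ((Fin d → ℝ) × ℝ) → ℝ := fun q =>
        fderiv ℝ φ q.1 (stdBasis d i) + Real.sqrt q.2 * (s - B i q) with hUi
      set Vi : ((Fin d → ℝ) × ℝ) → ℝ := fun q =>
        fderiv ℝ φ q.1 (stdBasis d i) + Real.sqrt q.2 * (A i q - s) with hVi
      have hsB : Tendsto (fun q => s - B i q) F (nhds (s - pd2 φ x i i / 2)) :=
        tendsto_const_nhds.sub (hBt i)
      have hAs : Tendsto (fun q => A i q - s) F (nhds (pd2 φ x i i / 2 - s)) :=
        (hAt i).sub tendsto_const_nhds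
      have hUt : Tendsto Ui F (nhds (pd φ x i)) := by
        have h1 := (hPt i).add (hsqrt.mul hsB)
        simpa using h1
      have hVt : Tendsto Vi F (nhds (pd φ x i)) := by
        have h1 := (hPt i).add (hsqrt.mul hAs)
        simpa using h1
      have hABt : Tendsto (fun q => 2*s - A i q - B i q) F (nhds (2*s - pd2 φ x i i)) := by
        have h1 : Tendsto (fun q : (Fin d → ℝ) × ℝ => 2*s - A i q - B i q) F
            (nhds (2*s - pd2 φ x i i / 2 - pd2 φ x i i / 2)) :=
          (tendsto_const_nhds.sub (hAt i)).sub (hBt i)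
        have h2 : 2*s - pd2 φ x i i / 2 - pd2 φ x i i / 2 = 2*s - pd2 φ x i i := by ring
        rwa [h2] at h1
      have hmain : Tendsto (fun q => (1+δ) * |pd φ x i| ^ δ * (2*s - A i q - B i q)) F
          (nhds ((1+δ) * |pd φ x i| ^ δ * (2*s - pd2 φ x i i))) :=
        tendsto_const_nhds.mul hABt
      have hrem : Tendsto (fun q =>
          (chi δ (Ui q) - chi δ (Vi q)) / Real.sqrt q.2 -
            (1+δ) * |pd φ x i| ^ δ * (2*s - A i q - B i q)) F (nhds 0) := by
        rw [tendsto_zero_iff_abs_tendsto_zero]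
        have hg : Tendsto (fun q => (1+δ) * (|Ui q - pd φ x i| + |Vi q - pd φ x i|) ^ δ *
            |2*s - A i q - B i q|) F (nhds 0) := by
          have h1 : Tendsto (fun q => |Ui q - pd φ x i| + |Vi q - pd φ x i|) F (nhds 0) := by
            have h2a : Tendsto (fun q => |Ui q - pd φ x i|) F (nhds |pd φ x i - pd φ x i|) :=
              (hUt.sub tendsto_const_nhds).abs
            have h2b : Tendsto (fun q => |Vi q - pd φ x i|) F (nhds |pd φ x i - pd φ x i|) :=
              (hVt.sub tendsto_const_nhds).abs
            have h2 := h2a.add h2b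
            simpa using h2
          have h3 : Tendsto (fun q => (|Ui q - pd φ x i| + |Vi q - pd φ x i|) ^ δ) F
              (nhds 0) := by
            have h4 := (Real.continuousAt_rpow_const 0 δ (Or.inr hδ0.le)).tendsto.comp h1
            simpa [Function.comp_def, Real.zero_rpow hδ0.ne'] using h4
          have h5a : Tendsto (fun q => (1+δ) * (|Ui q - pd φ x i| + |Vi q - pd φ x i|) ^ δ) F
              (nhds ((1+δ) * 0)) := tendsto_const_nhds.mul h3
          have h5 := h5a.mul hABt.abs
          simpa using h5
        apply squeeze_zero' (Filter.Eventually.of_forall fun q => abs_nonneg _) _ hg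
        filter_upwards [hev0] with q h0
        have hsqp : 0 < Real.sqrt q.2 := Real.sqrt_pos.2 h0
        have hUV : Ui q - Vi q = Real.sqrt q.2 * (2*s - A i q - B i q) := by
          rw [hUi, hVi]; ring
        have hsplit : (chi δ (Ui q) - chi δ (Vi q)) / Real.sqrt q.2 -
            (1+δ) * |pd φ x i| ^ δ * (2*s - A i q - B i q)
            = (chi δ (Ui q) - chi δ (Vi q) -
                (1+δ) * |pd φ x i| ^ δ * (Ui q - Vi q)) / Real.sqrt q.2 := by
          rw [hUV]
          field_simp
        rw [hsplit, abs_div, abs_of_pos hsqp, div_le_iff₀ hsqp]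
        calc |chi δ (Ui q) - chi δ (Vi q) - (1+δ) * |pd φ x i| ^ δ * (Ui q - Vi q)|
            ≤ (1+δ) * (|Ui q - pd φ x i| + |Vi q - pd φ x i|) ^ δ * |Ui q - Vi q| :=
              chi_diff_bound hδ0 hδ1.le _ _ _
          _ = (1+δ) * (|Ui q - pd φ x i| + |Vi q - pd φ x i|) ^ δ *
              |2*s - A i q - B i q| * Real.sqrt q.2 := by
              rw [hUV, abs_mul, abs_of_pos hsqp]; ring
      have hsum := hmain.add hrem
      have heq : (fun q : (Fin d → ℝ) × ℝ =>
          (1+δ) * |pd φ x i| ^ δ * (2*s - A i q - B i q) +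
          ((chi δ (Ui q) - chi δ (Vi q)) / Real.sqrt q.2 -
            (1+δ) * |pd φ x i| ^ δ * (2*s - A i q - B i q)))
          = fun q => (chi δ (Ui q) - chi δ (Vi q)) / Real.sqrt q.2 := by
        funext q; ring
      rw [heq] at hsum
      have hval : (1+δ) * |pd φ x i| ^ δ * (2*s - pd2 φ x i i) + 0
          = (1+δ) * (|pd φ x i| ^ δ * (2*s - pd2 φ x i i)) := by ring
      rw [hval] at hsum
      exact hsum
    have hsum2 := tendsto_finset_sum Finset.univ (fun i (_ : i ∈ Finset.univ) => hterm i)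
    have heq2 : ∑ i : Fin d, (1+δ) * (|pd φ x i| ^ δ * (2*s - pd2 φ x i i))
        = (1+δ) * ∑ i : Fin d, |pd φ x i| ^ δ * (2*s - pd2 φ x i i) := by
      rw [Finset.mul_sum]
    rw [heq2] at hsum2
    exact hsum2
  have hsumid : ∀ s : ℝ, ∑ i : Fin d, |pd φ x i| ^ δ * (2*s - pd2 φ x i i)
      = s * (2 * ∑ i : Fin d, |pd φ x i| ^ δ) - ∑ i : Fin d, |pd φ x i| ^ δ * pd2 φ x i i := by
    intro s
    have he : ∀ i : Fin d, |pd φ x i| ^ δ * (2*s - pd2 φ x i i)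
        = s * (2 * |pd φ x i| ^ δ) - |pd φ x i| ^ δ * pd2 φ x i i := fun i => by ring
    rw [Finset.sum_congr rfl (fun i _ => he i), Finset.sum_sub_distrib,
      ← Finset.mul_sum, ← Finset.mul_sum]
  have hT0 : ∀ s : ℝ, s < L → (1+δ) * ∑ i : Fin d, |pd φ x i| ^ δ * (2*s - pd2 φ x i i) < 0 := by
    intro s hs
    have h1 : s * (2 * ∑ i : Fin d, |pd φ x i| ^ δ) <
        ∑ i : Fin d, |pd φ x i| ^ δ * pd2 φ x i i := by
      rw [hL] at hs
      exact (lt_div_iff₀ (by positivity)).mp hs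
    rw [hsumid s]
    apply mul_neg_of_pos_of_neg (by linarith)
    linarith
  have hT0' : ∀ s : ℝ, L < s →
      0 < (1+δ) * ∑ i : Fin d, |pd φ x i| ^ δ * (2*s - pd2 φ x i i) := by
    intro s hs
    have h1 : (∑ i : Fin d, |pd φ x i| ^ δ * pd2 φ x i i) <
        s * (2 * ∑ i : Fin d, |pd φ x i| ^ δ) := by
      rw [hL] at hs
      exact (div_lt_iff₀ (by positivity)).mp hs
    rw [hsumid s]
    apply mul_pos (by linarith)
    linarith
  refine tendsto_order.2 ⟨?_, ?_⟩
  · intro c hc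
    obtain ⟨s, hcs, hsL⟩ := exists_between hc
    have hMneg := (tendsto_order.1 (hMt s)).2 0 (hT0 s hsL)
    filter_upwards [hev0, hMneg] with q h0 hMq
    have hsqp : 0 < Real.sqrt q.2 := Real.sqrt_pos.2 h0
    have hsq : Real.sqrt q.2 * Real.sqrt q.2 = q.2 := Real.mul_self_sqrt h0.le
    have hkey := PhiEps_key hd hδ0 V hV φ q.1 q.2
    set a : Fin d → ℝ := fun i => φ (q.1 + Real.sqrt q.2 • stdBasis d i) - φ q.1 with ha2
    set b : Fin d → ℝ := fun i => φ (q.1 - Real.sqrt q.2 • stdBasis d i) - φ q.1 with hb2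
    have haA : ∀ i, a i = q.2 * A i q + Real.sqrt q.2 * fderiv ℝ φ q.1 (stdBasis d i) := by
      intro i
      simp only [hA, ha2]
      field_simp
      ring
    have hbB : ∀ i, b i = q.2 * B i q - Real.sqrt q.2 * fderiv ℝ φ q.1 (stdBasis d i) := by
      intro i
      simp only [hB, hb2]
      field_simp
      ring
    have hper : ∀ i ∈ Finset.univ, chi δ (q.2 * s - a i) + chi δ (q.2 * s - b i)
        = (Real.sqrt q.2 ^ ((1:ℝ)+δ) * Real.sqrt q.2) *
          ((chi δ (fderiv ℝ φ q.1 (stdBasis d i) + Real.sqrt q.2 * (s - B i q)) -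
            chi δ (fderiv ℝ φ q.1 (stdBasis d i) + Real.sqrt q.2 * (A i q - s))) /
            Real.sqrt q.2) := by
      intro i _
      have h1 : q.2 * s - a i = -(Real.sqrt q.2 *
          (fderiv ℝ φ q.1 (stdBasis d i) + Real.sqrt q.2 * (A i q - s))) := by
        linear_combination (A i q - s) * hsq - haA i
      have h2 : q.2 * s - b i = Real.sqrt q.2 *
          (fderiv ℝ φ q.1 (stdBasis d i) + Real.sqrt q.2 * (s - B i q)) := by
        linear_combination (B i q - s) * hsq - hbB i
      rw [h1, h2, chi_neg', chi_mul δ hδ0 (Real.sqrt_nonneg q.2),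
        chi_mul δ hδ0 (Real.sqrt_nonneg q.2)]
      field_simp
      ring
    have hexp : Hfun δ a b (q.2 * s)
        = (Real.sqrt q.2 ^ ((1:ℝ)+δ) * Real.sqrt q.2) * M s q := by
      rw [Hfun, Finset.sum_congr rfl hper, ← Finset.mul_sum, hM]
    have hHs : Hfun δ a b (q.2 * s) < 0 := by
      rw [hexp]
      apply mul_neg_of_pos_of_neg _ hMq
      have := Real.rpow_pos_of_pos hsqp ((1:ℝ)+δ)
      positivity
    have hlt : q.2 * s < PhiEps V φ q.1 q.2 := by
      have h6 : Hfun δ a b (q.2*s) < Hfun δ a b (PhiEps V φ q.1 q.2) := by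
        rw [hkey]; exact hHs
      exact (Hfun_strictMono hd hδ0 a b).lt_iff_lt.mp h6
    show c < u q
    have h7 : s < PhiEps V φ q.1 q.2 / q.2 := by
      rw [lt_div_iff₀ h0, mul_comm]
      exact hlt
    exact lt_trans hcs h7
  · intro c hc
    obtain ⟨s, hsL, hcs⟩ := exists_between hc
    have hMpos := (tendsto_order.1 (hMt s)).1 0 (hT0' s hsL)
    filter_upwards [hev0, hMpos] with q h0 hMq
    have hsqp : 0 < Real.sqrt q.2 := Real.sqrt_pos.2 h0
    have hsq : Real.sqrt q.2 * Real.sqrt q.2 = q.2 := Real.mul_self_sqrt h0.le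
    have hkey := PhiEps_key hd hδ0 V hV φ q.1 q.2
    set a : Fin d → ℝ := fun i => φ (q.1 + Real.sqrt q.2 • stdBasis d i) - φ q.1 with ha2
    set b : Fin d → ℝ := fun i => φ (q.1 - Real.sqrt q.2 • stdBasis d i) - φ q.1 with hb2
    have haA : ∀ i, a i = q.2 * A i q + Real.sqrt q.2 * fderiv ℝ φ q.1 (stdBasis d i) := by
      intro i
      simp only [hA, ha2]
      field_simp
      ring
    have hbB : ∀ i, b i = q.2 * B i q - Real.sqrt q.2 * fderiv ℝ φ q.1 (stdBasis d i) := by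
      intro i
      simp only [hB, hb2]
      field_simp
      ring
    have hper : ∀ i ∈ Finset.univ, chi δ (q.2 * s - a i) + chi δ (q.2 * s - b i)
        = (Real.sqrt q.2 ^ ((1:ℝ)+δ) * Real.sqrt q.2) *
          ((chi δ (fderiv ℝ φ q.1 (stdBasis d i) + Real.sqrt q.2 * (s - B i q)) -
            chi δ (fderiv ℝ φ q.1 (stdBasis d i) + Real.sqrt q.2 * (A i q - s))) /
            Real.sqrt q.2) := by
      intro i _
      have h1 : q.2 * s - a i = -(Real.sqrt q.2 *
          (fderiv ℝ φ q.1 (stdBasis d i) + Real.sqrt q.2 * (A i q - s))) := by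
        linear_combination (A i q - s) * hsq - haA i
      have h2 : q.2 * s - b i = Real.sqrt q.2 *
          (fderiv ℝ φ q.1 (stdBasis d i) + Real.sqrt q.2 * (s - B i q)) := by
        linear_combination (B i q - s) * hsq - hbB i
      rw [h1, h2, chi_neg', chi_mul δ hδ0 (Real.sqrt_nonneg q.2),
        chi_mul δ hδ0 (Real.sqrt_nonneg q.2)]
      field_simp
      ring
    have hexp : Hfun δ a b (q.2 * s)
        = (Real.sqrt q.2 ^ ((1:ℝ)+δ) * Real.sqrt q.2) * M s q := by
      rw [Hfun, Finset.sum_congr rfl hper, ← Finset.mul_sum, hM]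
    have hHs : 0 < Hfun δ a b (q.2 * s) := by
      rw [hexp]
      apply mul_pos _ hMq
      have := Real.rpow_pos_of_pos hsqp ((1:ℝ)+δ)
      positivity
    have hlt : PhiEps V φ q.1 q.2 < q.2 * s := by
      have h6 : Hfun δ a b (PhiEps V φ q.1 q.2) < Hfun δ a b (q.2*s) := by
        rw [hkey]; exact hHs
      exact (Hfun_strictMono hd hδ0 a b).lt_iff_lt.mp h6
    show u q < c
    have h7 : PhiEps V φ q.1 q.2 / q.2 < s := by
      rw [div_lt_iff₀ h0, mul_comm]
      exact hlt
    exact lt_trans h7 hcs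
end

section
/- For nonempty A ⊆ {1,…,d}, let W_A = {p ∈ ℝ^d : |p_i| = |p_j| for all i,j ∈ A, and |p_i| > |p_j| for all i ∈ A, j ∉ A}, writing W_i for W_{{i}}, and define F : 𝒮^d × (⋃_{i=1}^d W_i) → ℝ by F(X,p) = X_{ii}/2 when p ∈ W_i. Then for every nonempty A ⊆ {1,…,d}, every p ∈ W_A and every X ∈ 𝒮^d: limsup_{(Y,q) → (X,p), q ∈ ⋃_{i=1}^d W_i} F(Y,q) = (1/2)·max_{i∈A} X_{ii} and liminf_{(Y,q) → (X,p), q ∈ ⋃_{i=1}^d W_i} F(Y,q) = (1/2)·min_{i∈A} X_{ii}. -/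
open Filter Set

/-- For nonempty `A ⊆ {1,…,d}`,
`W_A = {p : |p_i| = |p_j| ∀ i,j ∈ A, and |p_i| > |p_j| ∀ i ∈ A, j ∉ A}`. -/
def WA (d : ℕ) (A : Finset (Fin d)) : Set (Fin d → ℝ) :=
  {p | (∀ i ∈ A, ∀ j ∈ A, |p i| = |p j|) ∧ ∀ i ∈ A, ∀ j : Fin d, j ∉ A → |p j| < |p i|}

/-- **Envelopes of the crystalline infinity Laplacian (computation of `F⋆` and `F_⋆`).**
Let `F : 𝒮^d × (⋃ᵢ W_i) → ℝ` be given by `F(X,p) = X_{ii}/2` when `p ∈ W_i`.  Then for every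
nonempty `A ⊆ {1,…,d}`, every `p ∈ W_A` and every symmetric `X`,
`limsup_{(Y,q)→(X,p), q ∈ ⋃ᵢ W_i} F(Y,q) = (1/2) max_{i∈A} X_{ii}` and
`liminf_{(Y,q)→(X,p), q ∈ ⋃ᵢ W_i} F(Y,q) = (1/2) min_{i∈A} X_{ii}`. -/
theorem stmt18 (d : ℕ) (hd : 0 < d)
    (F : Matrix (Fin d) (Fin d) ℝ → (Fin d → ℝ) → ℝ)
    (hF : ∀ i : Fin d, ∀ p ∈ WA d {i}, ∀ X : Matrix (Fin d) (Fin d) ℝ, F X p = X i i / 2)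
    (A : Finset (Fin d)) (hA : A.Nonempty) (p : Fin d → ℝ) (hp : p ∈ WA d A)
    (X : Matrix (Fin d) (Fin d) ℝ) (hX : X.IsSymm) :
    limsup (fun q : Matrix (Fin d) (Fin d) ℝ × (Fin d → ℝ) => F q.1 q.2)
        (nhdsWithin (X, p) {q : Matrix (Fin d) (Fin d) ℝ × (Fin d → ℝ) |
          q.2 ∈ ⋃ i : Fin d, WA d {i}}) =
      (A.sup' hA fun i => X i i) / 2 ∧
    liminf (fun q : Matrix (Fin d) (Fin d) ℝ × (Fin d → ℝ) => F q.1 q.2)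
        (nhdsWithin (X, p) {q : Matrix (Fin d) (Fin d) ℝ × (Fin d → ℝ) |
          q.2 ∈ ⋃ i : Fin d, WA d {i}}) =
      (A.inf' hA fun i => X i i) / 2 := by
  classical
  obtain ⟨hpA, hpB⟩ := hp
  set S : Set (Matrix (Fin d) (Fin d) ℝ × (Fin d → ℝ)) :=
    {q : Matrix (Fin d) (Fin d) ℝ × (Fin d → ℝ) | q.2 ∈ ⋃ i : Fin d, WA d {i}} with hS
  set L := nhdsWithin (X, p) S with hL
  obtain ⟨i₀, hi₀⟩ := id hA
  set c := |p i₀| with hc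
  have hne : (Finset.univ : Finset (Fin d)).Nonempty := ⟨i₀, Finset.mem_univ _⟩
  set δ := Finset.univ.inf' hne (fun j => if j ∈ A then 1 else (c - |p j|) / 2) with hδdef
  have hδpos : 0 < δ := by
    rw [hδdef, Finset.lt_inf'_iff]
    intro j _
    by_cases hj : j ∈ A
    · simp [hj]
    · simp only [hj, if_false]
      have := hpB i₀ hi₀ j hj
      linarith
  have hδj : ∀ j ∉ A, |p j| + 2 * δ ≤ c := by
    intro j hj
    have h1 : δ ≤ (c - |p j|) / 2 := by
      have h0 := Finset.inf'_le (fun j => if j ∈ A then 1 else (c - |p j|) / 2)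
        (Finset.mem_univ j)
      rw [if_neg hj] at h0
      exact h0
    linarith
  -- near p, coordinates are close
  have hnear : ∀ᶠ q in L, ∀ j : Fin d, |q.2 j - p j| < δ := by
    apply nhdsWithin_le_nhds
    refine eventually_all.2 fun j => ?_
    have hcont : Continuous (fun q : Matrix (Fin d) (Fin d) ℝ × (Fin d → ℝ) =>
        |q.2 j - p j|) := (((continuous_apply j).comp continuous_snd).sub continuous_const).abs
    have : (X, p) ∈ {q : Matrix (Fin d) (Fin d) ℝ × (Fin d → ℝ) | |q.2 j - p j| < δ} := by
      simp [hδpos]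
    exact (isOpen_lt hcont continuous_const).mem_nhds this
  have hmemS : ∀ᶠ q in L, q ∈ S := eventually_mem_nhdsWithin
  -- main local structure lemma
  have ev1 : ∀ᶠ q in L, ∃ i ∈ A, F q.1 q.2 = q.1 i i / 2 := by
    filter_upwards [hmemS, hnear] with q hqS hqn
    simp only [hS, mem_setOf_eq, mem_iUnion] at hqS
    obtain ⟨i, hqi⟩ := hqS
    refine ⟨i, ?_, hF i q.2 hqi q.1⟩
    by_contra hiA
    have hii₀ : i₀ ∉ ({i} : Finset (Fin d)) := by
      simp only [Finset.mem_singleton]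
      rintro rfl; exact hiA hi₀
    have h1 : |q.2 i₀| < |q.2 i| :=
      hqi.2 i (Finset.mem_singleton_self i) i₀ hii₀
    have h2 : |(|q.2 i| - |p i|)| < δ :=
      lt_of_le_of_lt (abs_abs_sub_abs_le_abs_sub _ _) (hqn i)
    have h3 : |(|q.2 i₀| - |p i₀|)| < δ :=
      lt_of_le_of_lt (abs_abs_sub_abs_le_abs_sub _ _) (hqn i₀)
    have h2' := abs_lt.mp h2
    have h3' := abs_lt.mp h3
    have h4 := hδj i hiA
    rw [← hc] at h3'
    linarith [h2'.1, h2'.2, h3'.1, h3'.2]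
  -- entries of the matrix are close
  have ev2 : ∀ ε : ℝ, 0 < ε → ∀ᶠ q in L, ∀ i : Fin d, |q.1 i i - X i i| < ε := by
    intro ε hε
    apply nhdsWithin_le_nhds
    refine eventually_all.2 fun i => ?_
    have hcont : Continuous (fun q : Matrix (Fin d) (Fin d) ℝ × (Fin d → ℝ) =>
        |q.1 i i - X i i|) :=
      (((Continuous.matrix_elem continuous_fst i i).sub
        continuous_const)).abs
    have : (X, p) ∈ {q : Matrix (Fin d) (Fin d) ℝ × (Fin d → ℝ) | |q.1 i i - X i i| < ε} := by
      simp [hε]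
    exact (isOpen_lt hcont continuous_const).mem_nhds this
  set M := A.sup' hA fun i => X i i with hM
  set m := A.inf' hA fun i => X i i with hm
  have evbound : ∀ ε : ℝ, 0 < ε → ∀ᶠ q in L,
      F q.1 q.2 ≤ M / 2 + ε ∧ m / 2 - ε ≤ F q.1 q.2 := by
    intro ε hε
    filter_upwards [ev1, ev2 ε hε] with q hq1 hq2
    obtain ⟨i, hiA, hFq⟩ := hq1
    have hsup : X i i ≤ M := Finset.le_sup' (fun i => X i i) hiA
    have hinf : m ≤ X i i := Finset.inf'_le (fun i => X i i) hiA
    have := abs_lt.mp (hq2 i)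
    rw [hFq]
    constructor <;> linarith [this.1, this.2]
  -- the frequently part: along a sequence in W_i with matrix X
  have freq : ∀ i ∈ A, ∃ᶠ q in L, F q.1 q.2 = X i i / 2 := by
    intro i hiA
    set σ : ℝ := if 0 ≤ p i then 1 else -1 with hσ
    set g : ℕ → Matrix (Fin d) (Fin d) ℝ × (Fin d → ℝ) :=
      fun n => (X, Function.update p i (p i + σ / (n + 1))) with hg
    have habs : ∀ n : ℕ, |p i + σ / (n + 1 : ℝ)| = |p i| + 1 / (n + 1 : ℝ) := by
      intro n
      have hn : (0 : ℝ) < 1 / (n + 1 : ℝ) := by positivity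
      by_cases h : 0 ≤ p i
      · rw [hσ, if_pos h, abs_of_nonneg (by linarith), abs_of_nonneg h]
      · push_neg at h
        rw [hσ, if_neg (not_le.2 h), abs_of_neg (by rw [neg_div]; linarith), abs_of_neg h]
        ring
    have hW : ∀ n : ℕ, (g n).2 ∈ WA d {i} := by
      intro n
      constructor
      · intro a ha b hb
        rw [Finset.mem_singleton] at ha hb
        subst ha; subst hb; rfl
      · intro a ha j hj
        rw [Finset.mem_singleton] at ha hj
        rw [ha]
        have hji : j ≠ i := fun hji' => hj (ha ▸ hji')
        simp only [hg, Function.update_of_ne hji, Function.update_self]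
        rw [habs n]
        have hn : (0 : ℝ) < 1 / (n + 1 : ℝ) := by positivity
        have hle : |p j| ≤ |p i| := by
          by_cases hjA : j ∈ A
          · exact le_of_eq (hpA j hjA i hiA)
          · exact le_of_lt (hpB i hiA j hjA)
        linarith
    have hgS : ∀ n : ℕ, g n ∈ S := by
      intro n
      simp only [hS, mem_setOf_eq, mem_iUnion]
      exact ⟨i, hW n⟩
    have htend : Tendsto g atTop L := by
      rw [hL, tendsto_nhdsWithin_iff]
      refine ⟨?_, Eventually.of_forall hgS⟩
      refine Tendsto.prodMk_nhds tendsto_const_nhds ?_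
      rw [tendsto_pi_nhds]
      intro j
      by_cases hji : j = i
      · subst hji
        simp only [hg, Function.update_self]
        have h1 : Tendsto (fun n : ℕ => σ / (n + 1 : ℝ)) atTop (nhds 0) := by
          have := tendsto_one_div_add_atTop_nhds_zero_nat (𝕜 := ℝ)
          have h2 := this.const_mul σ
          rw [mul_zero] at h2
          refine h2.congr fun n => ?_
          field_simp
        have := h1.const_add (p j)
        simpa using this
      · simp only [hg, Function.update_of_ne hji]
        exact tendsto_const_nhds
    refine htend.frequently (Frequently.of_forall fun n => ?_)
    exact hF i (g n).2 (hW n) X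
  haveI hLne : L.NeBot := by
    rw [neBot_iff]
    intro h
    have hfr := freq i₀ hi₀
    rw [h] at hfr
    simp at hfr
  have hbdd_above : L.IsBoundedUnder (· ≤ ·) (fun q => F q.1 q.2) :=
    ⟨M / 2 + 1, eventually_map.2 (by
      filter_upwards [evbound 1 one_pos] with q hq using hq.1)⟩
  have hbdd_below : L.IsBoundedUnder (· ≥ ·) (fun q => F q.1 q.2) :=
    ⟨m / 2 - 1, eventually_map.2 (by
      filter_upwards [evbound 1 one_pos] with q hq using hq.2)⟩
  constructor
  · apply le_antisymm
    · refine le_of_forall_pos_le_add fun ε hε => ?_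
      exact limsup_le_of_le hbdd_below.isCoboundedUnder_le
        (by filter_upwards [evbound ε hε] with q hq using hq.1)
    · obtain ⟨j, hjA, hj⟩ := Finset.exists_mem_eq_sup' hA fun i => X i i
      refine le_limsup_of_frequently_le ?_ hbdd_above
      refine (freq j hjA).mono fun q hq => ?_
      rw [hq, hM, hj]
  · apply le_antisymm
    · obtain ⟨j, hjA, hj⟩ := Finset.exists_mem_eq_inf' hA fun i => X i i
      refine liminf_le_of_frequently_le ?_ hbdd_below
      refine (freq j hjA).mono fun q hq => ?_
      rw [hq, hm, hj]
    · refine le_of_forall_pos_le_add fun ε hε => ?_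
      have h1 : m / 2 - ε ≤ liminf (fun q : Matrix (Fin d) (Fin d) ℝ × (Fin d → ℝ) =>
          F q.1 q.2) L :=
        le_liminf_of_le hbdd_above.isCoboundedUnder_ge
          (by filter_upwards [evbound ε hε] with q hq using hq.2)
      linarith
end
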